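/- arXiv:1306.6232 — 6 statements merged into one kernel-verified Lean document; each statement's English description precedes it below -/
import Mathlib

section
/- Let k ≥ 1 and let n_1, …, n_k be nonnegative integers. Then the number of words on the alphabet {1,…,k} in which the letter i appears exactly n_i times (for each i) and no two adjacent letters are equal, equals Φ(∏_{i=1}^k l_{n_i}(t)). -/
/-!
Reading `Φ(p)` as `∫₀^∞ p(t) e^{-t} dt`, integration by parts gives `Φ(p) = p(0) + Φ(p')`, and
the generating function `exp(tx/(1+x))` gives `l'_{m+1} + l'_m = l_m`. For a content `s`
(a multiset of letters) put `h(s, i) = Φ(l'_{s_i} ∏_{j ≠ i} l_{s_j})`. Then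
`Φ(∏_j l_{s_j}) = [s = 0] + Σ_i h(s, i)` and `h(s + i, i) + h(s, i) = Φ(∏_j l_{s_j})`.
The number of Carlitz words of content `s` starting with `i` obeys the same two rules, because
prepending `i` maps the Carlitz words of content `s` not starting with `i` bijectively onto those
of content `s + i` starting with `i`. Both vanish when `i ∉ s`, and these rules determine them by
induction on `s`.
-/

/-- The Laguerre-type polynomial `l_k(t)`: `l_0 = 1` and for `k ≥ 1`,
`l_k(t) = Σ_{i=1}^{k} (−1)^{k−i} C(k−1, i−1) t^i / i!`. -/
noncomputable def lag (k : ℕ) : Polynomial ℝ :=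
  if k = 0 then 1
  else ∑ i ∈ Finset.Icc 1 k,
    Polynomial.C ((-1 : ℝ) ^ (k - i) * (Nat.choose (k - 1) (i - 1)) / (Nat.factorial i)) *
      Polynomial.X ^ i

/-- The linear functional `Φ` with `Φ(t^n) = n!`. -/
noncomputable def Phi (p : Polynomial ℝ) : ℝ :=
  ∑ n ∈ p.support, p.coeff n * (Nat.factorial n)

open Polynomial Finset
open scoped Nat

noncomputable def PhiLinear : ℝ[X] →ₗ[ℝ] ℝ :=
  Polynomial.lsum fun n => LinearMap.mulRight ℝ (n ! : ℝ)

lemma PhiLinear_apply (p : ℝ[X]) : PhiLinear p = Phi p := rfl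

lemma Phi_zero : Phi 0 = 0 := map_zero PhiLinear

lemma Phi_add (p q : ℝ[X]) : Phi (p + q) = Phi p + Phi q := by
  simp only [← PhiLinear_apply, map_add]

lemma Phi_sum {ι : Type*} (s : Finset ι) (f : ι → ℝ[X]) :
    Phi (∑ i ∈ s, f i) = ∑ i ∈ s, Phi (f i) := by
  simp only [← PhiLinear_apply, map_sum]

lemma Phi_monomial (n : ℕ) (a : ℝ) : Phi (monomial n a) = a * n ! := by
  rw [← PhiLinear_apply, PhiLinear, lsum_apply, sum_monomial_index] <;> simp

lemma Phi_eq_eval_zero_add_Phi_derivative (p : ℝ[X]) :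
    Phi p = p.eval 0 + Phi (derivative p) := by
  induction p using Polynomial.induction_on' with
  | add p q hp hq =>
    rw [Phi_add, derivative_add, Phi_add, eval_add, hp, hq]
    ring
  | monomial n a =>
    rcases n with _ | n
    · rw [Phi_monomial, derivative_monomial]
      simp [Phi_zero]
    · rw [derivative_monomial, Phi_monomial, Phi_monomial, eval_monomial, Nat.factorial_succ]
      push_cast
      ring

lemma Phi_prod {ι : Type*} [DecidableEq ι] (s : Finset ι) (f : ι → ℝ[X]) :
    Phi (∏ i ∈ s, f i) =
      ∏ i ∈ s, (f i).eval 0 + ∑ i ∈ s, Phi (derivative (f i) * ∏ j ∈ s.erase i, f j) := by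
  rw [Phi_eq_eval_zero_add_Phi_derivative, eval_prod, derivative_prod_finset, Phi_sum]
  simp only [mul_comm]

lemma lag_zero : lag 0 = 1 := rfl

lemma lag_one : lag 1 = X := by simp [lag]

lemma coeff_lag_succ_zero (k : ℕ) : (lag (k + 1)).coeff 0 = 0 := by
  simp [lag]

lemma coeff_lag_succ_succ (k j : ℕ) :
    (lag (k + 1)).coeff (j + 1) = (-1) ^ (k + j) * k.choose j / (j + 1)! := by
  simp only [lag, Nat.add_one_ne_zero, if_false, finsetSum_coeff, coeff_C_mul_X_pow]
  rw [Finset.sum_ite_eq]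
  by_cases hj : j ≤ k
  · have hsign : (-1 : ℝ) ^ (k + j) = (-1) ^ (k - j) := by
      rw [show k + j = k - j + 2 * j by omega, pow_add, pow_mul, neg_one_sq, one_pow, mul_one]
    simp [hj, hsign]
  · simp [hj, Nat.choose_eq_zero_of_lt (not_le.mp hj)]

lemma coeff_derivative_lag_succ (k j : ℕ) :
    (derivative (lag (k + 1))).coeff j = (-1) ^ (k + j) * k.choose j / j ! := by
  rw [coeff_derivative, coeff_lag_succ_succ, Nat.factorial_succ]
  push_cast
  field_simp

lemma derivative_lag_succ_add_derivative_lag (m : ℕ) :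
    derivative (lag (m + 1)) + derivative (lag m) = lag m := by
  rcases m with _ | k
  · simp [lag_one, lag_zero]
  ext j
  rw [coeff_add, coeff_derivative_lag_succ, coeff_derivative_lag_succ]
  rcases j with _ | i
  · simp [coeff_lag_succ_zero, pow_succ]
  · rw [coeff_lag_succ_succ, Nat.choose_succ_succ']
    push_cast
    ring

lemma eval_zero_lag (m : ℕ) : (lag m).eval 0 = if m = 0 then 1 else 0 := by
  rcases m with _ | k
  · simp [lag_zero]
  · simp [← coeff_zero_eq_eval_zero, coeff_lag_succ_zero]

section Words

variable {α : Type*} [DecidableEq α]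

def carlitzWords (s : Multiset α) : Finset (List α) :=
  (s.lists.filter (List.IsChain (· ≠ ·))).toFinset

@[simp]
lemma mem_carlitzWords {s : Multiset α} {w : List α} :
    w ∈ carlitzWords s ↔ w.IsChain (· ≠ ·) ∧ (w : Multiset α) = s := by
  simp [carlitzWords, Multiset.mem_lists_iff, eq_comm, and_comm]

def carlitzHeadCount (s : Multiset α) (i : α) : ℕ :=
  #{w ∈ carlitzWords s | w.head? = some i}

lemma card_carlitzWords [Fintype α] (s : Multiset α) :
    #(carlitzWords s) = (if s = 0 then 1 else 0) + ∑ i, carlitzHeadCount s i := by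
  have hnil : #{w ∈ carlitzWords s | w.head? = none} = if s = 0 then 1 else 0 := by
    split_ifs with hs
    · rw [card_eq_one]
      refine ⟨[], ?_⟩
      ext w
      simp only [mem_filter, mem_carlitzWords, List.head?_eq_none_iff, mem_singleton, hs]
      constructor
      · exact fun h => h.2
      · rintro rfl
        exact ⟨⟨.nil, rfl⟩, rfl⟩
    · rw [card_eq_zero, filter_eq_empty_iff]
      intro w hw hnil
      simp_all
  rw [card_eq_sum_card_fiberwise (f := List.head?) (t := univ) (fun _ _ => mem_univ _),
    Fintype.sum_option, hnil]
  rfl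

lemma carlitzHeadCount_of_notMem {s : Multiset α} {i : α} (hi : i ∉ s) :
    carlitzHeadCount s i = 0 := by
  rw [carlitzHeadCount, card_eq_zero, filter_eq_empty_iff]
  rintro (_ | ⟨a, w⟩) hw hhead
  · simp at hhead
  · simp only [mem_carlitzWords, List.head?_cons, Option.some.injEq] at hw hhead
    exact hi (hhead ▸ hw.2 ▸ by simp)

lemma cons_mem_carlitzWords_cons {s : Multiset α} {i : α} {w : List α} :
    i :: w ∈ carlitzWords (i ::ₘ s) ↔ w ∈ carlitzWords s ∧ w.head? ≠ some i := by
  simp only [mem_carlitzWords, List.isChain_cons, ← Multiset.cons_coe, Multiset.cons_inj_right]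
  have hhead : (∀ y ∈ w.head?, i ≠ y) ↔ w.head? ≠ some i := by
    cases w.head? <;> simp [eq_comm]
  rw [hhead]
  tauto

lemma carlitzHeadCount_cons (s : Multiset α) (i : α) :
    carlitzHeadCount (i ::ₘ s) i = #{w ∈ carlitzWords s | w.head? ≠ some i} := by
  rw [carlitzHeadCount]
  refine card_nbij' List.tail (List.cons i) ?_ ?_ ?_ ?_
  · rintro (_ | ⟨a, w⟩) hw
    · simp at hw
    · simp only [coe_filter, Set.mem_ofPred_eq, List.head?_cons, Option.some.injEq] at hw
      obtain ⟨hw, rfl⟩ := hw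
      simpa using cons_mem_carlitzWords_cons.mp hw
  · intro w hw
    simp only [coe_filter, Set.mem_ofPred_eq] at hw ⊢
    exact ⟨cons_mem_carlitzWords_cons.mpr hw, rfl⟩
  · rintro (_ | ⟨a, w⟩) hw
    · simp at hw
    · simp only [coe_filter, Set.mem_ofPred_eq, List.head?_cons, Option.some.injEq] at hw
      simp [hw.2]
  · intro w _
    rfl

lemma carlitzHeadCount_cons_add (s : Multiset α) (i : α) :
    carlitzHeadCount (i ::ₘ s) i + carlitzHeadCount s i = #(carlitzWords s) := by
  rw [carlitzHeadCount_cons, carlitzHeadCount, add_comm, card_filter_add_card_filter_not]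

end Words

section HeadRecurrence

variable {α : Type*} [Fintype α] [DecidableEq α]

def SatisfiesHeadRecurrence (f : Multiset α → α → ℝ) : Prop :=
  (∀ s i, i ∉ s → f s i = 0) ∧
    ∀ s i, f (i ::ₘ s) i + f s i = (if s = 0 then 1 else 0) + ∑ j, f s j

lemma SatisfiesHeadRecurrence.unique {f g : Multiset α → α → ℝ}
    (hf : SatisfiesHeadRecurrence f) (hg : SatisfiesHeadRecurrence g) : f = g := by
  funext s
  induction s using Multiset.strongInductionOn with
  | ih s ih =>
    funext i
    by_cases hi : i ∈ s
    · obtain ⟨t, rfl⟩ := Multiset.exists_cons_of_mem hi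
      have hft := hf.2 t i
      have hgt := hg.2 t i
      rw [ih t (Multiset.lt_cons_self t i)] at hft
      linarith
    · rw [hf.1 s i hi, hg.1 s i hi]

lemma satisfiesHeadRecurrence_carlitzHeadCount :
    SatisfiesHeadRecurrence fun (s : Multiset α) i => (carlitzHeadCount s i : ℝ) := by
  refine ⟨fun s i hi => by simp [carlitzHeadCount_of_notMem hi], fun s i => ?_⟩
  have h := (carlitzHeadCount_cons_add s i).trans (card_carlitzWords s)
  simp only
  exact_mod_cast h

noncomputable def phiHead (s : Multiset α) (i : α) : ℝ :=
  Phi (derivative (lag (s.count i)) * ∏ j ∈ univ.erase i, lag (s.count j))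

lemma Phi_prod_lag_count (s : Multiset α) :
    Phi (∏ j, lag (s.count j)) = (if s = 0 then 1 else 0) + ∑ i, phiHead s i := by
  simp only [Phi_prod, eval_zero_lag, prod_boole, Multiset.count_eq_zero, mem_univ,
    forall_const, ← Multiset.eq_zero_iff_forall_notMem]
  rfl

lemma satisfiesHeadRecurrence_phiHead : SatisfiesHeadRecurrence (phiHead (α := α)) := by
  refine ⟨fun s i hi => by simp [phiHead, Multiset.count_eq_zero_of_notMem hi, lag_zero, Phi_zero],
    fun s i => ?_⟩
  have hrest : ∏ j ∈ univ.erase i, lag ((i ::ₘ s).count j) = ∏ j ∈ univ.erase i, lag (s.count j) :=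
    prod_congr rfl fun j hj => by rw [Multiset.count_cons_of_ne (ne_of_mem_erase hj)]
  rw [← Phi_prod_lag_count, phiHead, phiHead, Multiset.count_cons_self, hrest, ← Phi_add,
    ← add_mul, derivative_lag_succ_add_derivative_lag,
    mul_prod_erase univ (fun j => lag (s.count j)) (mem_univ i)]

end HeadRecurrence

theorem Phi_prod_lag_count_eq_card_carlitzWords {α : Type*} [Fintype α] [DecidableEq α]
    (s : Multiset α) : Phi (∏ i, lag (s.count i)) = #(carlitzWords s) := by
  rw [Phi_prod_lag_count, card_carlitzWords,
    satisfiesHeadRecurrence_phiHead.unique satisfiesHeadRecurrence_carlitzHeadCount]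
  push_cast
  rfl

theorem stmt0_general (k : ℕ) (n : Fin k → ℕ) :
    Phi (∏ i, lag (n i)) =
      Nat.card {w : List (Fin k) // List.Chain' (· ≠ ·) w ∧ ∀ i, w.count i = n i} := by
  set s : Multiset (Fin k) := ∑ i, n i • {i}
  have hcount (i : Fin k) : s.count i = n i := by
    simp [s, Multiset.count_sum', Multiset.count_singleton]
  have hwords (w : List (Fin k)) :
      (List.Chain' (· ≠ ·) w ∧ ∀ i, w.count i = n i) ↔ w ∈ carlitzWords s := by
    simp only [mem_carlitzWords, Multiset.ext, Multiset.coe_count, hcount]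
    rfl
  rw [Nat.card_congr (Equiv.subtypeEquivRight hwords), Nat.card_eq_finsetCard,
    ← Phi_prod_lag_count_eq_card_carlitzWords]
  simp only [hcount]

/-- The number of Carlitz words (no two adjacent letters equal) on the alphabet `Fin k`
in which letter `i` appears exactly `n i` times is `Φ(∏_i l_{n i}(t))`. -/
theorem stmt0 (k : ℕ) (hk : 1 ≤ k) (n : Fin k → ℕ) :
    Phi (∏ i, lag (n i)) =
      Nat.card {w : List (Fin k) // List.Chain' (· ≠ ·) w ∧ ∀ i, w.count i = n i} :=
  stmt0_general k n
end

section
/- For every n ≥ 0, Σ_c l_{len(c)}(t) = t^n/n! in ℝ[t], where the sum is over all compositions c of n and len(c) is the number of parts of c (for n = 0 the only composition is the empty one, with l_0 = 1). -/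
open Finset Polynomial
open scoped fwdDiff

theorem CompositionAsSet.length_compositionAsSetEquiv_symm {n : ℕ} (hn : n ≠ 0)
    (s : Finset (Fin (n - 1))) :
    ((compositionAsSetEquiv n).symm s).length = s.card + 1 := by
  let shift : Fin (n - 1) ↪ Fin (n + 1) := (Fin.castLEEmb (by omega)).trans (Fin.succEmb n)
  have boundaries_eq : ((compositionAsSetEquiv n).symm s).boundaries
      = insert 0 (insert (Fin.last n) (s.map shift)) := by
    ext i
    simp only [compositionAsSetEquiv, Equiv.coe_fn_symm_mk, Set.mem_toFinset, Set.mem_ofPred_eq,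
      mem_insert, mem_map]
    simp [shift, Fin.ext_iff, eq_comm, -Fin.val_eq_zero_iff]
  have zero_notMem : (0 : Fin (n + 1)) ∉ insert (Fin.last n) (s.map shift) := by
    simp [shift, Fin.ext_iff]
    omega
  have last_notMem : Fin.last n ∉ s.map shift := by
    simp [shift, Fin.ext_iff]
    omega
  rw [CompositionAsSet.length, boundaries_eq, card_insert_of_notMem zero_notMem,
    card_insert_of_notMem last_notMem, card_map]
  rfl

theorem Composition.sum_apply_length {M : Type*} [AddCommMonoid M] (f : ℕ → M) (m : ℕ) :
    ∑ c : Composition (m + 1), f c.length = ∑ k ∈ range (m + 1), m.choose k • f (k + 1) := by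
  let e := (compositionEquiv (m + 1)).trans (compositionAsSetEquiv (m + 1))
  have length_eq (c : Composition (m + 1)) : c.length = (e c).card + 1 := by
    rw [← c.toCompositionAsSet_length, ← CompositionAsSet.length_compositionAsSetEquiv_symm
      m.succ_ne_zero]
    simp [e, compositionEquiv]
  calc ∑ c : Composition (m + 1), f c.length
      = ∑ s : Finset (Fin m), f (s.card + 1) :=
        Fintype.sum_equiv e _ _ fun c ↦ by rw [length_eq]
    _ = ∑ k ∈ range (m + 1), m.choose k • f (k + 1) := by
        rw [← powerset_univ, sum_powerset_apply_card (fun k ↦ f (k + 1)), card_univ,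
          Fintype.card_fin]

theorem Finset.sum_Icc_one_eq_sum_range {M : Type*} [AddCommMonoid M] (f : ℕ → M) (n : ℕ) :
    ∑ i ∈ Icc 1 n, f i = ∑ k ∈ range n, f (k + 1) := by
  rw [range_eq_Ico, sum_Ico_add', zero_add, Ico_add_one_right_eq_Icc]

theorem lag_succ_eq_fwdDiff_iter (j : ℕ) :
    lag (j + 1) = (Δ_[1])^[j] (fun i : ℕ ↦ ((i + 1).factorial : ℝ)⁻¹ • X ^ (i + 1)) 0 := by
  rw [fwdDiff_iter_eq_sum_shift, lag, if_neg j.succ_ne_zero, sum_Icc_one_eq_sum_range]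
  refine sum_congr rfl fun k _ ↦ ?_
  simp only [Nat.add_sub_add_right, add_tsub_cancel_right, zero_add, smul_eq_mul, mul_one,
    zsmul_eq_mul, smul_eq_C_mul]
  rw [← mul_assoc, div_eq_mul_inv, C_mul]
  congr 2
  simp

/-- For every `n ≥ 0`, `Σ_c l_{len(c)}(t) = t^n / n!`, where the sum is over all
compositions `c` of `n` and `len(c)` is the number of parts of `c`. -/
theorem stmt7 (n : ℕ) :
    ∑ c : Composition n, lag c.length =
      ((Nat.factorial n : ℝ))⁻¹ • Polynomial.X ^ n := by
  cases n with
  | zero =>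
    have length_eq_zero (c : Composition 0) : c.length = 0 := c.length_eq_zero.2 rfl
    simp [length_eq_zero, lag, composition_card]
  | succ m =>
    simp_rw [Composition.sum_apply_length, lag_succ_eq_fwdDiff_iter]
    rw [← shift_eq_sum_fwdDiff_iter, zero_add, smul_eq_mul, mul_one]
end

section
/- Fix m ≥ 1. In the ring of formal power series in x over the polynomial ring ℚ[t], Σ_{n≥0} p_{m,n}(t) x^n = Σ_{j≥0} g^j/j!, where g = t·(x − x^m)·(1 − x^m)^{-1} (a series with zero constant coefficient, so the exponential sum is well-defined, and (1 − x^m)^{-1} is the inverse of the power series 1 − x^m). -/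
/-
Write `u = x + ⋯ + x^(m-1)`. A composition of `n` into `k` parts of size `< m` is a `k`-tuple
of exponents in `u^k` summing to `n`, so `Σ_n p_{m,n} x^n = Σ_k l_k(t) u^k`. Since
`(1 + u)(1 - x) = 1 - x^m`, the series `g` equals `t·w` with `w = u/(1+u)`. Expanding
`w^i ≡ Σ_{k ≤ N} c(i,k) u^k (mod u^(N+1))`, where `c(i,k)` is the coefficient of `y^k` in
`(y/(1+y))^i`, and using `l_k(t) = Σ_i c(i,k) t^i/i!`, the coefficients of `x^N` agree after
exchanging the two finite sums.
-/

/-- The Laguerre-type polynomial `l_k(t)` over `ℚ`: `l_0 = 1` and for `k ≥ 1`,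
`l_k(t) = Σ_{i=1}^{k} (−1)^{k−i} C(k−1, i−1) t^i / i!`. -/
noncomputable def lagQ (k : ℕ) : Polynomial ℚ :=
  if k = 0 then 1
  else ∑ i ∈ Finset.Icc 1 k,
    Polynomial.C ((-1 : ℚ) ^ (k - i) * (Nat.choose (k - 1) (i - 1)) / (Nat.factorial i)) *
      Polynomial.X ^ i

/-- `p_{m,n}(t) = Σ_c l_{len(c)}(t)`, summed over all compositions `c` of `n` each of whose
parts is at most `m − 1`. -/
noncomputable def pPoly (m n : ℕ) : Polynomial ℚ :=
  ∑ c ∈ Finset.univ.filter (fun c : Composition n => ∀ i ∈ c.blocks, i ≤ m - 1),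
    lagQ c.length

open PowerSeries Finset

theorem Composition.card_filter_eq_card_piFinset_filter_sum (s : Finset ℕ) (hs : 0 ∉ s)
    (n k : ℕ) :
    #{c : Composition n | (∀ b ∈ c.blocks, b ∈ s) ∧ c.length = k} =
      #{x ∈ Fintype.piFinset (fun _ : Fin k => s) | ∑ i, x i = n} := by
  refine card_bij (fun c _ j => c.blocks.getD j 0) ?_ ?_ ?_
  · intro c hc
    simp only [mem_filter, mem_univ, true_and] at hc
    obtain ⟨hs, rfl⟩ := hc
    have hget (j : Fin c.length) : c.blocks.getD j 0 = c.blocksFun j :=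
      List.getD_eq_getElem _ _ (by simp)
    simp only [mem_filter, Fintype.mem_piFinset, hget, c.sum_blocksFun, and_true]
    exact fun j => hs _ (c.blocksFun_mem_blocks j)
  · intro c₁ hc₁ c₂ hc₂ h
    simp only [mem_filter, mem_univ, true_and] at hc₁ hc₂
    refine Composition.ext <| List.ext_getElem
      (by rw [c₁.blocks_length, c₂.blocks_length, hc₁.2, hc₂.2]) fun j hj₁ hj₂ => ?_
    have := congrFun h ⟨j, by simpa [hc₁.2] using hj₁⟩
    rwa [List.getD_eq_getElem _ _ hj₁, List.getD_eq_getElem _ _ hj₂] at this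
  · intro x hx
    simp only [mem_filter, Fintype.mem_piFinset] at hx
    have hmem {b : ℕ} (hb : b ∈ List.ofFn x) : b ∈ s := by
      obtain ⟨j, rfl⟩ := List.mem_ofFn.mp hb
      exact hx.1 j
    refine ⟨⟨List.ofFn x, fun hb => Nat.pos_of_ne_zero fun h0 => hs (h0 ▸ hmem hb), by
      rw [List.sum_ofFn, hx.2]⟩, ?_, ?_⟩
    · simp only [mem_filter, mem_univ, true_and]
      exact ⟨fun b hb => hmem hb, List.length_ofFn⟩
    · funext j
      simp

theorem PowerSeries.coeff_sum_X_pow_pow {R : Type*} [CommSemiring R] (s : Finset ℕ) (k n : ℕ) :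
    coeff n ((∑ a ∈ s, X ^ a : R⟦X⟧) ^ k) =
      #{x ∈ Fintype.piFinset (fun _ : Fin k => s) | ∑ i, x i = n} := by
  rw [← Fin.prod_const, prod_univ_sum]
  simp only [prod_pow_eq_pow_sum, map_sum, coeff_X_pow]
  rw [sum_boole]
  simp [eq_comm]

-- `lagCoeff i k` is the coefficient of `y^k` in `(y/(1+y))^i`: the recursion is
-- `(1 + y)·(y/(1+y))^(i+1) = y·(y/(1+y))^i`.
def lagCoeff : ℕ → ℕ → ℤ
  | 0, k => if k = 0 then 1 else 0
  | _ + 1, 0 => 0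
  | i + 1, k + 1 => lagCoeff i k - lagCoeff (i + 1) k

theorem lagCoeff_of_lt {i k : ℕ} (h : k < i) : lagCoeff i k = 0 := by
  induction k generalizing i with
  | zero => obtain ⟨i, rfl⟩ : ∃ j, i = j + 1 := ⟨i - 1, by omega⟩; rfl
  | succ k ih =>
    obtain ⟨i, rfl⟩ : ∃ j, i = j + 1 := ⟨i - 1, by omega⟩
    rw [lagCoeff, ih (by omega), ih (by omega), sub_zero]

theorem lagCoeff_succ_succ {i k : ℕ} (h : i ≤ k) :
    lagCoeff (i + 1) (k + 1) = (-1) ^ (k - i) * k.choose i := by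
  induction k generalizing i with
  | zero =>
    obtain rfl : i = 0 := by omega
    rfl
  | succ k ih =>
    rw [lagCoeff]
    rcases i with _ | i
    · rw [ih k.zero_le]
      simp [lagCoeff, pow_succ]
    rw [ih (by omega)]
    rcases (show i + 1 ≤ k ∨ i = k by omega) with hik | rfl
    · obtain ⟨d, rfl⟩ := Nat.exists_eq_add_of_le hik
      rw [ih hik, show i + 1 + d - i = d + 1 by omega,
        show i + 1 + d + 1 - (i + 1) = d + 1 by omega, show i + 1 + d - (i + 1) = d by omega,
        Nat.choose_succ_succ']
      push_cast
      ring
    · rw [lagCoeff_of_lt (by omega)]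
      simp

theorem lagQ_eq_sum_lagCoeff {k n : ℕ} (hk : k ≤ n) :
    lagQ k = ∑ i ∈ range (n + 1),
      Polynomial.C ((lagCoeff i k : ℚ) / i.factorial) * Polynomial.X ^ i := by
  rcases k with _ | k
  · rw [lagQ, if_pos rfl, sum_range_succ', sum_eq_zero fun i _ => by
      rw [lagCoeff_of_lt i.succ_pos]; simp]
    simp [lagCoeff]
  rw [lagQ, if_neg k.succ_ne_zero]
  refine (sum_congr rfl fun i hi => ?_).trans (sum_subset ?_ fun i _ hi => ?_)
  · obtain ⟨j, rfl, hj⟩ : ∃ j, i = j + 1 ∧ j ≤ k := ⟨i - 1, by rw [mem_Icc] at hi; omega⟩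
    rw [lagCoeff_succ_succ hj]
    push_cast
    simp
  · intro i hi
    rw [mem_Icc] at hi
    rw [mem_range]
    omega
  · rcases i with _ | i
    · simp [lagCoeff]
    · rw [lagCoeff_of_lt (by rw [mem_Icc] at hi; omega)]
      simp

theorem sum_range_lagCoeff_zero {A : Type*} [CommRing A] (f : A) (N : ℕ) :
    ∑ k ∈ range (N + 1), (lagCoeff 0 k : A) * f ^ k = 1 := by
  simp [lagCoeff, sum_ite_eq']

theorem sum_lagCoeff_succ_mul_one_add {A : Type*} [CommRing A] (f : A) (i N : ℕ) :
    (∑ k ∈ range (N + 1), (lagCoeff (i + 1) k : A) * f ^ k) * (1 + f) =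
      (∑ k ∈ range (N + 1), (lagCoeff i k : A) * f ^ k) * f -
        lagCoeff (i + 1) (N + 1) * f ^ (N + 1) := by
  induction N with
  | zero => simp [lagCoeff]
  | succ N ih =>
    rw [sum_range_succ _ (N + 1), sum_range_succ _ (N + 1), add_mul, ih,
      show lagCoeff (i + 1) (N + 1 + 1) = lagCoeff i (N + 1) - lagCoeff (i + 1) (N + 1) from rfl]
    push_cast
    ring

theorem dvd_pow_sub_sum_lagCoeff {A : Type*} [CommRing A] {f w : A} (hf : IsUnit (1 + f))
    (hw : w * (1 + f) = f) (N i : ℕ) :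
    f ^ (N + 1) ∣ w ^ i - ∑ k ∈ range (N + 1), (lagCoeff i k : A) * f ^ k := by
  induction i with
  | zero => simp [sum_range_lagCoeff_zero]
  | succ i ih =>
    rw [← hf.dvd_mul_right]
    have key : (w ^ (i + 1) - ∑ k ∈ range (N + 1), (lagCoeff (i + 1) k : A) * f ^ k) * (1 + f) =
        (w ^ i - ∑ k ∈ range (N + 1), (lagCoeff i k : A) * f ^ k) * f +
          lagCoeff (i + 1) (N + 1) * f ^ (N + 1) := by
      rw [sub_mul, sum_lagCoeff_succ_mul_one_add, pow_succ, mul_assoc, hw]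
      ring
    rw [key]
    exact dvd_add (ih.mul_right f) (dvd_mul_left _ _)

section
variable {R : Type*} [CommRing R] {m : ℕ}

theorem one_add_sum_X_pow_mul_one_sub_X (hm : 1 ≤ m) :
    (1 + ∑ a ∈ Ico 1 m, X ^ a : R⟦X⟧) * (1 - X) = 1 - X ^ m := by
  rw [← pow_zero (X : R⟦X⟧), ← sum_eq_sum_Ico_succ_bot hm, ← range_eq_Ico, mul_comm,
    pow_zero, mul_neg_geom_sum]

theorem X_sub_X_pow_mul_invOfUnit_mul (hm : 1 ≤ m) :
    (X - X ^ m) * invOfUnit (1 - X ^ m) 1 * (1 + ∑ a ∈ Ico 1 m, X ^ a : R⟦X⟧) =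
      ∑ a ∈ Ico 1 m, X ^ a := by
  have hinv : (1 - X ^ m : R⟦X⟧) * invOfUnit (1 - X ^ m) 1 = 1 :=
    mul_invOfUnit _ _ (by simp [zero_pow (by omega : m ≠ 0)])
  have hsub : (X - X ^ m : R⟦X⟧) = (∑ a ∈ Ico 1 m, X ^ a) * (1 - X) := by
    linear_combination (one_add_sum_X_pow_mul_one_sub_X (R := R) hm).symm
  calc (X - X ^ m) * invOfUnit (1 - X ^ m) 1 * (1 + ∑ a ∈ Ico 1 m, X ^ a : R⟦X⟧)
      = (∑ a ∈ Ico 1 m, X ^ a) * ((1 + ∑ a ∈ Ico 1 m, X ^ a) * (1 - X)) *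
          invOfUnit (1 - X ^ m) 1 := by rw [hsub]; ring
    _ = ∑ a ∈ Ico 1 m, X ^ a := by
      rw [one_add_sum_X_pow_mul_one_sub_X hm, mul_assoc, hinv, mul_one]

theorem coeff_pow_eq_sum_lagCoeff (hm : 1 ≤ m) (N i : ℕ) :
    coeff N (((X - X ^ m) * invOfUnit (1 - X ^ m) 1 : R⟦X⟧) ^ i) =
      ∑ k ∈ range (N + 1),
        (lagCoeff i k : R) * coeff N ((∑ a ∈ Ico 1 m, X ^ a : R⟦X⟧) ^ k) := by
  have hu : X ∣ (∑ a ∈ Ico 1 m, X ^ a : R⟦X⟧) :=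
    dvd_sum fun a ha => dvd_pow_self X (by rw [mem_Ico] at ha; omega)
  have hunit : IsUnit (1 + ∑ a ∈ Ico 1 m, X ^ a : R⟦X⟧) := by
    rw [isUnit_iff_constantCoeff, map_add, map_one, X_dvd_iff.mp hu, add_zero]
    exact isUnit_one
  have hdvd := (pow_dvd_pow_of_dvd hu (N + 1)).trans
    (dvd_pow_sub_sum_lagCoeff hunit (X_sub_X_pow_mul_invOfUnit_mul hm) N i)
  have := X_pow_dvd_iff.mp hdvd N N.lt_succ_self
  rw [map_sub, map_sum, sub_eq_zero] at this
  rw [this]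
  refine sum_congr rfl fun k _ => ?_
  rw [← map_intCast (C (R := R)), coeff_C_mul]
end

theorem pPoly_eq_sum_coeff (m n : ℕ) :
    pPoly m n = ∑ k ∈ range (n + 1),
      coeff n ((∑ a ∈ Ico 1 m, X ^ a : (Polynomial ℚ)⟦X⟧) ^ k) * lagQ k := by
  rw [pPoly, ← sum_fiberwise_of_maps_to (g := Composition.length) (t := range (n + 1))
    fun c _ => mem_range.mpr (Nat.lt_succ_of_le c.length_le)]
  refine sum_congr rfl fun k _ => ?_
  rw [filter_filter, sum_congr rfl fun c hc => by rw [(mem_filter.mp hc).2.2], sum_const,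
    nsmul_eq_mul, coeff_sum_X_pow_pow,
    ← Composition.card_filter_eq_card_piFinset_filter_sum _ (by simp)]
  congr 4
  ext c
  refine and_congr_left' (forall₂_congr fun b hb => ?_)
  have := c.one_le_blocks hb
  rw [mem_Ico]
  omega

/-- The exponential sum is taken coefficientwise: the coefficient of `x^N` in `g^j` vanishes for
`j > N`. -/
theorem stmt8 (m : ℕ) (hm : 1 ≤ m) :
    PowerSeries.mk (fun n => pPoly m n) =
      PowerSeries.mk (fun N => ∑ j ∈ Finset.range (N + 1),
        PowerSeries.coeff (R := Polynomial ℚ) N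
          ((Nat.factorial j : ℚ)⁻¹ •
            (PowerSeries.C (R := Polynomial ℚ) Polynomial.X *
              (PowerSeries.X - PowerSeries.X ^ m) *
              PowerSeries.invOfUnit (1 - PowerSeries.X ^ m) 1) ^ j)) := by
  refine PowerSeries.ext fun N => ?_
  have hterm (j : ℕ) : coeff N ((j.factorial : ℚ)⁻¹ •
      (C Polynomial.X * (X - X ^ m) * invOfUnit (1 - X ^ m) 1 : (Polynomial ℚ)⟦X⟧) ^ j) =
      (j.factorial : ℚ)⁻¹ • (Polynomial.X ^ j *
        coeff N (((X - X ^ m) * invOfUnit (1 - X ^ m) 1 : (Polynomial ℚ)⟦X⟧) ^ j)) := by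
    rw [mul_assoc, mul_pow, ← map_pow, coeff_smul, coeff_C_mul]
  simp only [coeff_mk, hterm, coeff_pow_eq_sum_lagCoeff hm, mul_sum, smul_sum, pPoly_eq_sum_coeff]
  rw [sum_comm]
  refine sum_congr rfl fun k hk => ?_
  rw [lagQ_eq_sum_lagCoeff (mem_range_succ_iff.mp hk), mul_sum]
  refine sum_congr rfl fun i _ => ?_
  rw [Polynomial.smul_eq_C_mul, ← Polynomial.C_eq_intCast, div_eq_inv_mul, Polynomial.C_mul]
  ring
end

section
/- Fix integers k ≥ 1 and m ≥ 1. In the ring of multivariate formal power series over ℚ in x_1, …, x_k, let C be the series whose coefficient at x_1^{d_1}⋯x_k^{d_k} is the number of m-Carlitz words on {1,…,k} in which letter i appears exactly d_i times. Then (1 − Σ_{i=1}^k (x_i − x_i^m)·(1 − x_i^m)^{-1}) · C = 1, where (1 − x_i^m)^{-1} is the inverse of the power series 1 − x_i^m. -/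
/-!
Write `C_a` for the series of Carlitz words beginning with the letter `a`, so that
`C = 1 + ∑ a, C_a`. A word `a :: w` is `m`-Carlitz iff `w` is and does not begin with
`a^(m-1)`; and a Carlitz word beginning with `a^(m-1)` is `a^(m-1) ++ v` with `v` Carlitz and
not beginning with `a`. Since prefixing a fixed word `u` multiplies the generating series by
the monomial of `u`, this reads `C_a = x_a (C - x_a^(m-1) (C - C_a))`, that is
`C_a (1 - x_a^m) = (x_a - x_a^m) C`. Dividing by `1 - x_a^m` and summing over `a` gives the
identity.
-/

open MvPowerSeries

namespace List

variable {α : Type*} [DecidableEq α]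

noncomputable def parikh (w : List α) : α →₀ ℕ := Multiset.toFinsupp w

theorem parikh_eq_iff {w : List α} {d : α →₀ ℕ} : w.parikh = d ↔ ∀ a, w.count a = d a := by
  simp [parikh, Finsupp.ext_iff, Multiset.toFinsupp_apply]

theorem parikh_append (u v : List α) : (u ++ v).parikh = u.parikh + v.parikh := by
  simp [parikh, ← Multiset.coe_add, Multiset.toFinsupp_add]

theorem parikh_replicate (n : ℕ) (a : α) : (replicate n a).parikh = Finsupp.single a n := by
  ext b
  simp [parikh, Multiset.toFinsupp_apply, count_replicate, Finsupp.single_apply]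

theorem finite_setOf_parikh_eq (d : α →₀ ℕ) : {w : List α | w.parikh = d}.Finite :=
  (Multiset.lists (Finsupp.toMultiset d)).finite_toSet.subset fun w hw => by
    simp [← Multiset.toFinsupp_eq_iff.1 hw]

end List

section ParikhSeries

variable {α R : Type*} [DecidableEq α] [CommSemiring R]

noncomputable def parikhSeries (S : List α → Prop) : MvPowerSeries α R :=
  fun d => Nat.card {w // S w ∧ w.parikh = d}

theorem coeff_parikhSeries (S : List α → Prop) (d : α →₀ ℕ) :
    coeff d (parikhSeries S : MvPowerSeries α R) = Nat.card {w // S w ∧ w.parikh = d} :=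
  rfl

instance (S : List α → Prop) (d : α →₀ ℕ) : Finite {w // S w ∧ w.parikh = d} :=
  ((List.finite_setOf_parikh_eq d).subset fun _ hw => hw.2).to_subtype

theorem parikhSeries_eq_sum_fiberwise {β : Type*} [Fintype β] (S : List α → Prop)
    (f : List α → β) :
    (parikhSeries S : MvPowerSeries α R) = ∑ b, parikhSeries (fun w => S w ∧ f w = b) := by
  ext d
  simp only [map_sum, coeff_parikhSeries]
  rw [← Nat.cast_sum, ← Nat.card_sigma]
  congr 1
  exact Nat.card_congr
    { toFun := fun w => ⟨f w, w, ⟨w.2.1, rfl⟩, w.2.2⟩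
      invFun := fun x => ⟨x.2, x.2.2.1.1, x.2.2.2⟩
      left_inv := fun _ => rfl
      right_inv := by rintro ⟨b, w, ⟨hS, rfl⟩, hd⟩; rfl }

theorem parikhSeries_eq_add_compl (S Q : List α → Prop) :
    (parikhSeries S : MvPowerSeries α R) =
      parikhSeries (fun w => S w ∧ Q w) + parikhSeries (fun w => S w ∧ ¬ Q w) := by
  classical
  simpa using parikhSeries_eq_sum_fiberwise (R := R) S (fun w => decide (Q w))

theorem parikhSeries_nil_eq_one : (parikhSeries (· = []) : MvPowerSeries α R) = 1 := by
  ext d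
  rw [coeff_parikhSeries, coeff_one]
  split_ifs with hd
  · subst hd
    have : Unique {w : List α // w = [] ∧ w.parikh = 0} :=
      ⟨⟨⟨[], rfl, by simp [List.parikh]⟩⟩, by rintro ⟨w, rfl, -⟩; rfl⟩
    simp
  · have : IsEmpty {w : List α // w = [] ∧ w.parikh = d} :=
      ⟨by rintro ⟨w, rfl, h⟩; exact hd (by simpa [List.parikh] using h.symm)⟩
    simp

theorem monomial_parikh_mul_parikhSeries (u : List α) (S : List α → Prop) :
    monomial u.parikh 1 * (parikhSeries S : MvPowerSeries α R) =
      parikhSeries (fun w => ∃ v, w = u ++ v ∧ S v) := by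
  ext d
  rw [coeff_monomial_mul, coeff_parikhSeries, coeff_parikhSeries]
  split_ifs with hu
  · rw [one_mul]
    congr 1
    refine Nat.card_congr (Equiv.ofBijective (fun v => ⟨u ++ v, ⟨v, rfl, v.2.1⟩, ?_⟩) ⟨?_, ?_⟩)
    · rw [List.parikh_append, v.2.2, add_tsub_cancel_of_le hu]
    · intro v v' h
      exact Subtype.ext (List.append_cancel_left (congrArg Subtype.val h))
    · rintro ⟨_, ⟨v, rfl, hv⟩, rfl⟩
      exact ⟨⟨v, hv, by rw [List.parikh_append, add_tsub_cancel_left]⟩, rfl⟩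
  · have : IsEmpty {w // (∃ v, w = u ++ v ∧ S v) ∧ w.parikh = d} :=
      ⟨by rintro ⟨_, ⟨v, rfl, -⟩, rfl⟩; exact hu (by simp [List.parikh_append])⟩
    simp

end ParikhSeries

section Carlitz

variable {α : Type*}

def IsCarlitz (m : ℕ) (w : List α) : Prop := ∀ a, ¬ List.replicate m a <:+: w

-- `[]` is an infix of every word, so `IsCarlitz 0` holds for no word; the lemmas below
-- are stated for `m = n + 1`.

theorem IsCarlitz.of_infix {m : ℕ} {u w : List α} (h : IsCarlitz m w) (huw : u <:+: w) :
    IsCarlitz m u :=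
  fun a ha => h a (ha.trans huw)

theorem isCarlitz_nil (n : ℕ) : IsCarlitz (n + 1) ([] : List α) :=
  fun a h => by simpa using List.eq_nil_of_infix_nil h

theorem isCarlitz_cons {n : ℕ} {a : α} {w : List α} :
    IsCarlitz (n + 1) (a :: w) ↔ IsCarlitz (n + 1) w ∧ ¬ List.replicate n a <+: w := by
  constructor
  · intro h
    refine ⟨h.of_infix (List.suffix_cons a w).isInfix, fun hp => h a ?_⟩
    exact (List.cons_prefix_cons.2 ⟨rfl, hp⟩).isInfix
  · rintro ⟨hw, hp⟩ b hb
    rcases List.infix_cons_iff.1 hb with hpre | hinf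
    · rw [List.replicate_succ, List.cons_prefix_cons] at hpre
      obtain ⟨rfl, hpre⟩ := hpre
      exact hp hpre
    · exact hw b hinf

theorem not_replicate_prefix_replicate_append {a : α} {v : List α} (hv : v.head? ≠ some a)
    {r s : ℕ} (hrs : r < s) : ¬ List.replicate s a <+: List.replicate r a ++ v := by
  induction r generalizing s with
  | zero =>
    obtain ⟨s, rfl⟩ := Nat.exists_eq_succ_of_ne_zero hrs.ne'
    cases v with
    | nil => simp
    | cons b v => simp_all [List.replicate_succ, eq_comm]
  | succ r ih =>
    obtain ⟨s, rfl⟩ := Nat.exists_eq_succ_of_ne_zero (Nat.ne_zero_of_lt hrs)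
    simpa [List.replicate_succ] using ih (Nat.lt_of_succ_lt_succ hrs)

theorem isCarlitz_replicate_append_iff_of_le {n r : ℕ} {a : α} {v : List α} (hr : r ≤ n)
    (hv : v.head? ≠ some a) :
    IsCarlitz (n + 1) (List.replicate r a ++ v) ↔ IsCarlitz (n + 1) v := by
  induction r with
  | zero => rfl
  | succ r ih =>
    rw [List.replicate_succ, List.cons_append, isCarlitz_cons, ih (by omega),
      and_iff_left (not_replicate_prefix_replicate_append hv (by omega))]

theorem isCarlitz_replicate_append_iff {n : ℕ} {a : α} {v : List α} :
    IsCarlitz (n + 1) (List.replicate n a ++ v) ↔ IsCarlitz (n + 1) v ∧ v.head? ≠ some a := by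
  refine ⟨fun h => ⟨h.of_infix (List.suffix_append _ v).isInfix, fun hv => ?_⟩,
    fun ⟨hv, ha⟩ => (isCarlitz_replicate_append_iff_of_le le_rfl ha).2 hv⟩
  obtain ⟨t, rfl⟩ : ∃ t, v = a :: t := by cases v <;> simp_all
  exact h a ⟨[], t, by simp [List.replicate_succ']⟩

variable {R : Type*} [DecidableEq α]

theorem parikhSeries_isCarlitz_eq_one_add_sum [CommSemiring R] [Fintype α] (n : ℕ) :
    (parikhSeries (IsCarlitz (n + 1)) : MvPowerSeries α R) =
      1 + ∑ a, parikhSeries (fun w => IsCarlitz (n + 1) w ∧ w.head? = some a) := by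
  rw [parikhSeries_eq_sum_fiberwise _ List.head?, Fintype.sum_option, ← parikhSeries_nil_eq_one]
  congr 2
  funext w
  rw [List.head?_eq_none_iff, eq_iff_iff, and_iff_right_iff_imp]
  rintro rfl
  exact isCarlitz_nil n

theorem parikhSeries_isCarlitz_head_eq_X_mul [CommSemiring R] (n : ℕ) (a : α) :
    (parikhSeries (fun w => IsCarlitz (n + 1) w ∧ w.head? = some a) : MvPowerSeries α R) =
      X a * parikhSeries (fun w => IsCarlitz (n + 1) w ∧ ¬ List.replicate n a <+: w) := by
  rw [← pow_one (X a), X_pow_eq, ← List.parikh_replicate, monomial_parikh_mul_parikhSeries]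
  congr
  funext w
  cases w with
  | nil => simp
  | cons b w =>
    simp only [List.head?_cons, Option.some.injEq, isCarlitz_cons, List.replicate_one,
      List.singleton_append, List.cons.injEq]
    apply propext
    constructor
    · rintro ⟨hw, rfl⟩
      exact ⟨w, ⟨rfl, rfl⟩, hw⟩
    · rintro ⟨_, ⟨rfl, rfl⟩, hw⟩
      exact ⟨hw, rfl⟩

theorem parikhSeries_isCarlitz_replicate_prefix_eq_X_pow_mul [CommSemiring R] (n : ℕ) (a : α) :
    (parikhSeries (fun w => IsCarlitz (n + 1) w ∧ List.replicate n a <+: w) :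
        MvPowerSeries α R) =
      X a ^ n * parikhSeries (fun w => IsCarlitz (n + 1) w ∧ w.head? ≠ some a) := by
  rw [X_pow_eq, ← List.parikh_replicate, monomial_parikh_mul_parikhSeries]
  congr
  funext w
  apply propext
  constructor
  · rintro ⟨hw, t, rfl⟩
    exact ⟨t, rfl, isCarlitz_replicate_append_iff.1 hw⟩
  · rintro ⟨v, rfl, hv⟩
    exact ⟨isCarlitz_replicate_append_iff.2 hv, List.prefix_append _ _⟩

theorem parikhSeries_isCarlitz_head_mul_one_sub_X_pow [CommRing R] (n : ℕ) (a : α) :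
    (parikhSeries (fun w => IsCarlitz (n + 1) w ∧ w.head? = some a) : MvPowerSeries α R) *
        (1 - X a ^ (n + 1)) =
      (X a - X a ^ (n + 1)) * parikhSeries (IsCarlitz (n + 1)) := by
  have hhead := parikhSeries_isCarlitz_head_eq_X_mul (R := R) n a
  have hprefix := parikhSeries_isCarlitz_replicate_prefix_eq_X_pow_mul (R := R) n a
  have hsplit_prefix := parikhSeries_eq_add_compl (R := R) (IsCarlitz (n + 1))
    (List.replicate n a <+: ·)
  have hsplit_head := parikhSeries_eq_add_compl (R := R) (IsCarlitz (n + 1))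
    (·.head? = some a)
  linear_combination hhead - X a * hsplit_prefix - X a * hprefix + X a ^ (n + 1) * hsplit_head

end Carlitz

theorem stmt11_general (k m : ℕ) (hm : 1 ≤ m) (C : MvPowerSeries (Fin k) ℚ)
    (hC : ∀ d : Fin k →₀ ℕ, MvPowerSeries.coeff d C =
      Nat.card {w : List (Fin k) //
        (∀ i, ¬ (List.replicate m i <:+: w)) ∧ ∀ i, w.count i = d i}) :
    (1 - ∑ i, (MvPowerSeries.X i - MvPowerSeries.X i ^ m) *
        (1 - MvPowerSeries.X i ^ m)⁻¹) * C = 1 := by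
  obtain ⟨n, rfl⟩ : ∃ n, m = n + 1 := ⟨m - 1, by omega⟩
  have hC_eq : C = parikhSeries (IsCarlitz (n + 1)) := by
    ext d
    rw [hC, coeff_parikhSeries]
    exact congrArg Nat.cast (Nat.card_congr (Equiv.subtypeEquivRight fun w =>
      and_congr_right' List.parikh_eq_iff.symm))
  have hsummand (i : Fin k) : (X i - X i ^ (n + 1)) * (1 - X i ^ (n + 1))⁻¹ * C =
      parikhSeries (fun w => IsCarlitz (n + 1) w ∧ w.head? = some i) := by
    rw [mul_right_comm, eq_comm, MvPowerSeries.eq_mul_inv_iff_mul_eq (by simp), hC_eq]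
    exact parikhSeries_isCarlitz_head_mul_one_sub_X_pow n i
  rw [sub_mul, one_mul, Finset.sum_mul, Finset.sum_congr rfl fun i _ => hsummand i, hC_eq,
    parikhSeries_isCarlitz_eq_one_add_sum, add_sub_cancel_right]

/-- In `ℚ[[x_1,…,x_k]]`, if `C` is the series whose coefficient at `x_1^{d_1}⋯x_k^{d_k}`
counts the `m`-Carlitz words on `{1,…,k}` (no `m` consecutive equal letters) with letter `i`
appearing exactly `d i` times, then `(1 − Σ_i (x_i − x_i^m)(1 − x_i^m)⁻¹) · C = 1`. -/
theorem stmt11 (k m : ℕ) (hk : 1 ≤ k) (hm : 1 ≤ m) (C : MvPowerSeries (Fin k) ℚ)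
    (hC : ∀ d : Fin k →₀ ℕ, MvPowerSeries.coeff d C =
      Nat.card {w : List (Fin k) //
        (∀ i, ¬ (List.replicate m i <:+: w)) ∧ ∀ i, w.count i = d i}) :
    (1 - ∑ i, (MvPowerSeries.X i - MvPowerSeries.X i ^ m) *
        (1 - MvPowerSeries.X i ^ m)⁻¹) * C = 1 :=
  stmt11_general k m hm C hC
end

section
/- Let n ≥ 1 and m_1, …, m_n ≥ 1 be integers and τ the vincular pattern 1^{m_1}-1^{m_2}-⋯-1^{m_n}. In ℚ[[x,u]], Σ_c x^{sum(c)} u^{len(c)}, summed over all compositions c that contain τ, equals u·x^{m_1}·(1−x) · D_1^{-1} · (1−x−ux)^{-1} · ∏_{i=2}^n ( x^{m_i} + u·x^{m_i}·(1 − x^{m_i})·D_i^{-1} ), where D_i = 1 − x − u(x − x^{m_i}) (each D_i and 1−x−ux has constant coefficient 1, hence is invertible), sum(c) is the sum of the parts of c, and len(c) is the number of parts. -/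
/-- A composition `c = (c_1, …, c_p)` (a list of positive integers) contains the vincular
pattern `1^{m_1}-…-1^{m_n}` if there are monotone indices `f_1 ≤ … ≤ f_n` into the parts
of `c` such that for every part `j`, `Σ_{i : f_i = j} m_i ≤ c_j`. -/
def CompContains {n : ℕ} (m : Fin n → ℕ) (c : List ℕ) : Prop :=
  ∃ f : Fin n → Fin c.length, Monotone f ∧
    ∀ j : Fin c.length, (∑ i ∈ Finset.univ.filter fun i => f i = j, m i) ≤ c.get j

/-- The variable `x` of `ℚ[[x,u]]`. -/
noncomputable def px : MvPowerSeries (Fin 2) ℚ := MvPowerSeries.X 0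
/-- The variable `u` of `ℚ[[x,u]]`. -/
noncomputable def pu : MvPowerSeries (Fin 2) ℚ := MvPowerSeries.X 1
/-- `D_i = 1 − x − u(x − x^{m_i})`. -/
noncomputable def Dfac (mi : ℕ) : MvPowerSeries (Fin 2) ℚ := 1 - px - pu * (px - px ^ mi)

/-!
A composition contains `1^{m_1}-…-1^{m_n}` iff the greedy left-to-right scan, which puts into
each part as many of the blocks not yet placed as fit, places all `n` blocks. The scan is an
automaton with states `0, …, n` (the number of blocks placed): with `M_k = m_1 + … + m_k`, a part
of size `a` moves state `j` to the largest `k ≤ n` with `M_k ≤ M_j + a`. Hence the generating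
functions `F_i` of the compositions ending in state `i` satisfy the transfer system
`F_i = [i = 0] + Σ_j F_j W_{j,i}`, where `W_{j,i} = Σ u x^a` over the parts `a` leading from `j`
to `i`; every `W_{j,i} (1 - x)` is a binomial. The system is triangular, and solving it state by
state gives `F_n` as the product formula.
-/

namespace VincularPattern

section Greedy

variable (b : ℕ → ℕ) (n : ℕ)

def prefixSum (k : ℕ) : ℕ := ∑ t ∈ Finset.range k, b t

/-- In state `j` (the first `j` blocks are placed), a part of size `a` receives as many of the
following blocks as fit into it. -/
def greedyStep (j a : ℕ) : ℕ := Nat.findGreatest (fun k => prefixSum b k ≤ prefixSum b j + a) n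

def greedyState (c : List ℕ) : ℕ := c.foldl (greedyStep b n) 0

def PrefixEmbeds (k : ℕ) (c : List ℕ) : Prop :=
  ∃ f : ℕ → ℕ, (∀ i j, i ≤ j → j < k → f i ≤ f j) ∧ (∀ i < k, f i < c.length) ∧
    ∀ j, ∑ i ∈ (Finset.range k).filter (fun i => f i = j), b i ≤ c.getD j 0

variable {b n}

theorem prefixSum_succ (k : ℕ) : prefixSum b (k + 1) = prefixSum b k + b k :=
  Finset.sum_range_succ _ _

theorem prefixSum_add_sum_Ico {j k : ℕ} (h : j ≤ k) :
    prefixSum b j + ∑ i ∈ Finset.Ico j k, b i = prefixSum b k :=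
  Finset.sum_range_add_sum_Ico _ h

theorem prefixSum_mono : Monotone (prefixSum b) := fun _ _ h =>
  Finset.sum_le_sum_of_subset (Finset.range_subset_range.mpr h)

theorem prefixSum_strictMono (hb : ∀ t, 0 < b t) : StrictMono (prefixSum b) :=
  strictMono_nat_of_lt_succ fun k => by rw [prefixSum_succ]; have := hb k; omega

theorem greedyStep_le (j a : ℕ) : greedyStep b n j a ≤ n := Nat.findGreatest_le n

theorem prefixSum_greedyStep_le (j a : ℕ) :
    prefixSum b (greedyStep b n j a) ≤ prefixSum b j + a :=
  Nat.findGreatest_spec (P := fun k => prefixSum b k ≤ prefixSum b j + a) (Nat.zero_le n)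
    (by simp [prefixSum])

theorem le_greedyStep {j a k : ℕ} (hk : k ≤ n) (h : prefixSum b k ≤ prefixSum b j + a) :
    k ≤ greedyStep b n j a :=
  Nat.le_findGreatest hk h

theorem greedyStep_eq_iff {j a i : ℕ} (hi : i ≤ n) :
    greedyStep b n j a = i ↔
      prefixSum b i ≤ prefixSum b j + a ∧ (i < n → prefixSum b j + a < prefixSum b (i + 1)) := by
  constructor
  · rintro rfl
    refine ⟨prefixSum_greedyStep_le j a, fun hlt => ?_⟩
    exact lt_of_not_ge <| Nat.findGreatest_is_greatest
      (P := fun k => prefixSum b k ≤ prefixSum b j + a) (Nat.lt_succ_self _) hlt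
  · rintro ⟨hle, hlt⟩
    have hi' := le_greedyStep hi hle
    by_contra hne
    have hsucc : i + 1 ≤ greedyStep b n j a := by omega
    have := prefixSum_mono (b := b) hsucc
    have := prefixSum_greedyStep_le (b := b) (n := n) j a
    have := greedyStep_le (b := b) (n := n) j a
    omega

@[simp] theorem greedyState_nil : greedyState b n [] = 0 := rfl

theorem greedyState_append_singleton (c : List ℕ) (a : ℕ) :
    greedyState b n (c ++ [a]) = greedyStep b n (greedyState b n c) a := by
  simp [greedyState, List.foldl_append]

theorem greedyState_le (c : List ℕ) : greedyState b n c ≤ n := by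
  cases c using List.reverseRecOn with
  | nil => simp
  | append_singleton c a => rw [greedyState_append_singleton]; exact greedyStep_le _ _

theorem prefixEmbeds_zero (c : List ℕ) : PrefixEmbeds b 0 c :=
  ⟨fun _ => 0, by omega, by omega, fun j => by simp⟩

theorem PrefixEmbeds.append_singleton {j k a : ℕ} {c : List ℕ} (hj : PrefixEmbeds b j c)
    (hjk : j ≤ k) (h : prefixSum b k ≤ prefixSum b j + a) : PrefixEmbeds b k (c ++ [a]) := by
  obtain ⟨f, hmono, hlt, hsum⟩ := hj
  set L := c.length
  set g := fun i => if i < j then f i else L with hg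
  have hsplit : ∀ p, ∑ i ∈ (Finset.range k).filter (fun i => g i = p), b i =
      ∑ i ∈ (Finset.range j).filter (fun i => f i = p), b i +
        if L = p then ∑ i ∈ Finset.Ico j k, b i else 0 := by
    intro p
    rw [Finset.sum_filter, Finset.sum_filter, ← Finset.sum_range_add_sum_Ico _ hjk]
    congr 1
    · exact Finset.sum_congr rfl fun i hi => by simp [hg, Finset.mem_range.mp hi]
    · rw [← Finset.sum_const_zero, ← Finset.sum_ite_irrel]
      exact Finset.sum_congr rfl fun i hi => by
        simp [hg, not_lt.mpr (Finset.mem_Ico.mp hi).1]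
  refine ⟨g, fun i i' hii' hi' => ?_, fun i hi => ?_, fun p => ?_⟩
  · have := fun hij => hlt i hij
    by_cases hi'j : i' < j
    · simp only [hg, if_pos hi'j, if_pos (show i < j by omega)]; exact hmono i i' hii' hi'j
    · simp only [hg, if_neg hi'j]; split_ifs <;> omega
  · have := fun hij => hlt i hij
    simp only [hg, List.length_append, List.length_singleton]; split_ifs <;> omega
  · rw [hsplit]
    rcases lt_trichotomy p L with hp | rfl | hp
    · rw [if_neg (by omega), add_zero, List.getD_append _ _ _ _ hp]
      exact hsum p
    · have hempty : (Finset.range j).filter (fun i => f i = L) = ∅ :=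
        Finset.filter_eq_empty_iff.mpr fun i hi => (hlt i (Finset.mem_range.mp hi)).ne
      rw [hempty, Finset.sum_empty, zero_add, if_pos rfl,
        List.getD_append_right _ _ _ _ le_rfl, Nat.sub_self]
      have := prefixSum_add_sum_Ico (b := b) hjk
      simp only [List.getD_cons_zero]
      omega
    · have hempty : (Finset.range j).filter (fun i => f i = p) = ∅ :=
        Finset.filter_eq_empty_iff.mpr fun i hi => by have := hlt i (Finset.mem_range.mp hi); omega
      rw [hempty, Finset.sum_empty, if_neg (by omega)]
      exact Nat.zero_le _

/-- Blocks `j, …, k-1` are the ones placed in the last part, `j` being the first of them. -/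
theorem PrefixEmbeds.exists_of_append_singleton {k a : ℕ} {c : List ℕ}
    (h : PrefixEmbeds b k (c ++ [a])) :
    ∃ j ≤ k, PrefixEmbeds b j c ∧ prefixSum b k ≤ prefixSum b j + a := by
  obtain ⟨f, hmono, hlt, hsum⟩ := h
  set L := c.length
  set j := Nat.findGreatest (fun t => ∀ i < t, f i < L) k
  have hjk : j ≤ k := Nat.findGreatest_le k
  have hbefore : ∀ i < j, f i < L :=
    Nat.findGreatest_spec (P := fun t => ∀ i < t, f i < L) (Nat.zero_le k) (by omega)
  have hafter : ∀ i, j ≤ i → i < k → L ≤ f i := by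
    intro i hji hik
    have hj : ¬ ∀ i' < j + 1, f i' < L :=
      Nat.findGreatest_is_greatest (Nat.lt_succ_self j) (by omega)
    push Not at hj
    obtain ⟨i', hi'j, hi'⟩ := hj
    exact hi'.trans (hmono i' i (by omega) hik)
  refine ⟨j, hjk, ⟨f, fun i i' hii' hi' => hmono i i' hii' (by omega), hbefore, fun p => ?_⟩, ?_⟩
  · rcases lt_or_ge p L with hp | hp
    · calc ∑ i ∈ (Finset.range j).filter (fun i => f i = p), b i
          ≤ ∑ i ∈ (Finset.range k).filter (fun i => f i = p), b i :=
            Finset.sum_le_sum_of_subset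
              (Finset.filter_subset_filter _ (Finset.range_subset_range.mpr hjk))
        _ ≤ (c ++ [a]).getD p 0 := hsum p
        _ = c.getD p 0 := List.getD_append _ _ _ _ hp
    · have hempty : (Finset.range j).filter (fun i => f i = p) = ∅ :=
        Finset.filter_eq_empty_iff.mpr fun i hi => by
          have := hbefore i (Finset.mem_range.mp hi); omega
      simp [hempty]
  · have hlast : Finset.Ico j k ⊆ (Finset.range k).filter (fun i => f i = L) := fun i hi => by
      obtain ⟨hji, hik⟩ := Finset.mem_Ico.mp hi
      have := hafter i hji hik
      have := hlt i hik
      simp only [List.length_append, List.length_singleton] at this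
      simp only [Finset.mem_filter, Finset.mem_range]
      omega
    have := (Finset.sum_le_sum_of_subset hlast).trans (hsum L)
    rw [List.getD_append_right _ _ _ _ le_rfl, Nat.sub_self, List.getD_cons_zero] at this
    have := prefixSum_add_sum_Ico (b := b) hjk
    omega

theorem le_greedyState_of_prefixEmbeds {k : ℕ} {c : List ℕ} (hk : k ≤ n)
    (h : PrefixEmbeds b k c) : k ≤ greedyState b n c := by
  induction c using List.reverseRecOn generalizing k with
  | nil =>
    obtain ⟨f, -, hlt, -⟩ := h
    by_contra! hk0
    exact Nat.not_lt_zero _ (hlt 0 (by simpa using hk0))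
  | append_singleton c a ih =>
    obtain ⟨j, hjk, hj, hkj⟩ := h.exists_of_append_singleton
    rw [greedyState_append_singleton]
    refine le_greedyStep hk (hkj.trans ?_)
    have := prefixSum_mono (b := b) (ih (hjk.trans hk) hj)
    omega

theorem prefixEmbeds_greedyState (c : List ℕ) : PrefixEmbeds b (greedyState b n c) c := by
  induction c using List.reverseRecOn with
  | nil => exact prefixEmbeds_zero []
  | append_singleton c a ih =>
    rw [greedyState_append_singleton]
    exact ih.append_singleton (le_greedyStep (greedyState_le c) (Nat.le_add_right _ _))
      (prefixSum_greedyStep_le _ _)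

theorem prefixEmbeds_iff_greedyState_eq (c : List ℕ) :
    PrefixEmbeds b n c ↔ greedyState b n c = n :=
  ⟨fun h => le_antisymm (greedyState_le c) (le_greedyState_of_prefixEmbeds le_rfl h),
    fun h => h ▸ prefixEmbeds_greedyState c⟩

end Greedy

section Pattern

variable {n : ℕ}

/-- Padded by `1` past the last block: the padding is never read by the greedy scan and only
makes every block positive. -/
def blockSize (m : Fin n → ℕ) (t : ℕ) : ℕ := if h : t < n then m ⟨t, h⟩ else 1

theorem blockSize_pos {m : Fin n → ℕ} (hm : ∀ i, 1 ≤ m i) (t : ℕ) : 0 < blockSize m t := by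
  unfold blockSize
  split
  exacts [hm _, Nat.one_pos]

theorem blockSize_val (m : Fin n → ℕ) (i : Fin n) : blockSize m i = m i := by
  simp [blockSize]

theorem sum_filter_blockSize (m : Fin n → ℕ) {L : ℕ} (F : Fin n → Fin L) (g : ℕ → ℕ)
    (hg : ∀ i : Fin n, g i = F i) (p : Fin L) :
    ∑ i ∈ (Finset.range n).filter (fun i => g i = p), blockSize m i =
      ∑ i ∈ Finset.univ.filter (fun i => F i = p), m i := by
  rw [Finset.sum_filter, Finset.sum_filter, Finset.sum_range]
  exact Finset.sum_congr rfl fun i _ => by simp [hg, blockSize_val, Fin.ext_iff]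

theorem compContains_iff_prefixEmbeds (m : Fin n → ℕ) (c : List ℕ) :
    CompContains m c ↔ PrefixEmbeds (blockSize m) n c := by
  constructor
  · rintro ⟨F, hmono, hsum⟩
    set g : ℕ → ℕ := fun i => if h : i < n then F ⟨i, h⟩ else 0 with hg
    have hgF : ∀ i : Fin n, g i = F i := fun i => by simp [hg]
    refine ⟨g, fun i i' hii' hi' => ?_, fun i hi => ?_, fun p => ?_⟩
    · simpa [hg, hi', show i < n by omega] using
        hmono (show (⟨i, by omega⟩ : Fin n) ≤ ⟨i', hi'⟩ from hii')
    · simp [hg, hi]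
    · rcases lt_or_ge p c.length with hp | hp
      · rw [show p = (⟨p, hp⟩ : Fin c.length) from rfl, sum_filter_blockSize m F g hgF,
          List.getD_eq_getElem _ _ hp]
        exact hsum ⟨p, hp⟩
      · have hempty : (Finset.range n).filter (fun i => g i = p) = ∅ :=
          Finset.filter_eq_empty_iff.mpr fun i hi => by
            have := (F ⟨i, Finset.mem_range.mp hi⟩).isLt
            simp only [hg, dif_pos (Finset.mem_range.mp hi)]; omega
        simp [hempty]
  · rintro ⟨g, hmono, hlt, hsum⟩
    refine ⟨fun i => ⟨g i, hlt i i.isLt⟩, fun i i' hii' => hmono i i' hii' i'.isLt, fun p => ?_⟩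
    rw [← sum_filter_blockSize m _ g (fun _ => rfl) p, List.get_eq_getElem,
      ← List.getD_eq_getElem _ 0]
    exact hsum p

theorem compContains_iff_greedyState_eq (m : Fin n → ℕ) (c : List ℕ) :
    CompContains m c ↔ greedyState (blockSize m) n c = n :=
  (compContains_iff_prefixEmbeds m c).trans (prefixEmbeds_iff_greedyState_eq c)

end Pattern

open MvPowerSeries

noncomputable def bidegree (s l : ℕ) : Fin 2 →₀ ℕ := Finsupp.single 0 s + Finsupp.single 1 l

@[simp] theorem bidegree_apply_zero (s l : ℕ) : bidegree s l 0 = s := by simp [bidegree]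

@[simp] theorem bidegree_apply_one (s l : ℕ) : bidegree s l 1 = l := by simp [bidegree]

theorem eq_bidegree_iff {d : Fin 2 →₀ ℕ} {s l : ℕ} : d = bidegree s l ↔ d 0 = s ∧ d 1 = l := by
  refine ⟨by rintro rfl; simp, fun ⟨h0, h1⟩ => Finsupp.ext fun i => ?_⟩
  fin_cases i <;> simp [h0, h1]

theorem pu_mul_px_pow (a : ℕ) : pu * px ^ a = monomial (bidegree a 1) 1 := by
  rw [pu, px, X_pow_eq, X, monomial_mul_monomial, one_mul, bidegree, add_comm]

theorem coeff_mul_px (φ : MvPowerSeries (Fin 2) ℚ) (d : Fin 2 →₀ ℕ) :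
    coeff d (φ * px) = if d 0 = 0 then 0 else coeff (bidegree (d 0 - 1) (d 1)) φ := by
  rw [px, X, coeff_mul_monomial, mul_one]
  by_cases h : d 0 = 0
  · simp [Finsupp.single_le_iff, h]
  · rw [if_pos (Finsupp.single_le_iff.mpr (by omega)), if_neg h]
    have : d - Finsupp.single 0 1 = bidegree (d 0 - 1) (d 1) :=
      eq_bidegree_iff.mpr ⟨by simp, by simp⟩
    rw [this]

theorem coeff_mul_eq_of_coeff_eq {σ R : Type*} [Semiring R] {φ ψ ψ' : MvPowerSeries σ R}
    {d : σ →₀ ℕ}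
    (h : ∀ e ≤ d, coeff e ψ = coeff e ψ') : coeff d (φ * ψ) = coeff d (φ * ψ') := by
  classical
  rw [coeff_mul, coeff_mul]
  refine Finset.sum_congr rfl fun p hp => ?_
  rw [h p.2 (le_of_add_le_right (Finset.HasAntidiagonal.mem_antidiagonal.mp hp).le)]

open Classical in
/-- The series `Σ_{a ∈ A} u x^a`. -/
noncomputable def partSeries (A : Set ℕ) : MvPowerSeries (Fin 2) ℚ :=
  fun d => if d 1 = 1 ∧ d 0 ∈ A then 1 else 0

open Classical in
theorem coeff_partSeries (A : Set ℕ) (d : Fin 2 →₀ ℕ) :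
    coeff d (partSeries A) = if d 1 = 1 ∧ d 0 ∈ A then 1 else 0 := rfl

theorem partSeries_empty : partSeries ∅ = 0 := by
  ext d; simp [coeff_partSeries]

theorem partSeries_Ici_mul (lo : ℕ) : partSeries {a | lo ≤ a} * (1 - px) = pu * px ^ lo := by
  ext d
  rw [mul_sub, mul_one, map_sub, coeff_mul_px, pu_mul_px_pow, coeff_monomial, coeff_partSeries,
    coeff_partSeries]
  simp only [eq_bidegree_iff, bidegree_apply_zero, bidegree_apply_one, Set.mem_ofPred_eq]
  split_ifs <;> simp_all <;> omega

theorem partSeries_Ico_mul {lo hi : ℕ} (h : lo ≤ hi) :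
    partSeries {a | lo ≤ a ∧ a < hi} * (1 - px) = pu * px ^ lo - pu * px ^ hi := by
  rw [← partSeries_Ici_mul, ← partSeries_Ici_mul, ← sub_mul]
  congr 1
  ext d
  rw [map_sub, coeff_partSeries, coeff_partSeries, coeff_partSeries]
  simp only [Set.mem_ofPred_eq]
  split_ifs <;> simp_all <;> omega

theorem coeff_mul_partSeries (φ : MvPowerSeries (Fin 2) ℚ) {A : Set ℕ} (hA : 0 ∉ A)
    (d : Fin 2 →₀ ℕ) [DecidablePred (· ∈ A)] :
    coeff d (φ * partSeries A) = if d 1 = 0 then 0 else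
      ∑ a ∈ (Finset.Icc 1 (d 0)).filter (· ∈ A), coeff (bidegree (d 0 - a) (d 1 - 1)) φ := by
  classical
  set S := (Finset.Icc 1 (d 0)).filter (· ∈ A)
  have htrunc :
      coeff d (φ * partSeries A) = coeff d (φ * ∑ a ∈ S, monomial (bidegree a 1) 1) := by
    refine coeff_mul_eq_of_coeff_eq fun e he => ?_
    have he0 : e 0 ≤ d 0 := he 0
    simp only [map_sum, coeff_monomial, eq_bidegree_iff, coeff_partSeries, ite_and,
      Finset.sum_ite_eq, S, Finset.mem_filter, Finset.mem_Icc]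
    by_cases h0 : e 0 = 0
    · simp [h0, hA]
    · split_ifs <;> first | rfl | omega
  rw [htrunc, Finset.mul_sum, map_sum]
  split_ifs with hd1
  · refine Finset.sum_eq_zero fun a _ => ?_
    rw [coeff_mul_monomial, if_neg fun hle => by simpa [hd1] using hle 1]
  · refine Finset.sum_congr rfl fun a ha => ?_
    have ha' : a ≤ d 0 := (Finset.mem_Icc.mp (Finset.mem_filter.mp ha).1).2
    have hle : bidegree a 1 ≤ d := fun i => by fin_cases i <;> simp <;> omega
    have hsub : d - bidegree a 1 = bidegree (d 0 - a) (d 1 - 1) :=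
      eq_bidegree_iff.mpr ⟨by simp, by simp⟩
    rw [coeff_mul_monomial, if_pos hle, hsub, mul_one]

abbrev CompositionsWith (P : List ℕ → Prop) (s l : ℕ) : Type :=
  {c : List ℕ // (∀ x ∈ c, 0 < x) ∧ c.sum = s ∧ c.length = l ∧ P c}

namespace CompositionsWith

variable {P : List ℕ → Prop} {s l : ℕ}

instance : Finite (CompositionsWith P s l) :=
  Finite.of_injective (fun c => (⟨c.1, fun hx => c.2.1 _ hx, c.2.2.1⟩ : Composition s))
    fun _ _ h => Subtype.ext (congrArg Composition.blocks h)

theorem card_length_zero [Decidable (P [])] :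
    Nat.card (CompositionsWith P s 0) = if s = 0 ∧ P [] then 1 else 0 := by
  have hnil : ∀ c : CompositionsWith P s 0, c.1 = [] := fun c =>
    List.length_eq_zero_iff.mp c.2.2.2.1
  split_ifs with h
  · refine Nat.card_eq_one_iff_unique.mpr ⟨⟨fun c c' => Subtype.ext ?_⟩, ⟨⟨[], ?_⟩⟩⟩
    · rw [hnil c, hnil c']
    · simp [h.1, h.2]
  · have : IsEmpty (CompositionsWith P s 0) := ⟨fun c => h <| by
      have hc := c.2
      rw [hnil c] at hc
      exact ⟨by simpa using hc.2.1.symm, hc.2.2.2⟩⟩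
    exact Nat.card_of_isEmpty

theorem card_length_succ :
    Nat.card (CompositionsWith P s (l + 1)) =
      ∑ a ∈ Finset.Icc 1 s, Nat.card (CompositionsWith (fun c => P (c ++ [a])) (s - a) l) := by
  let snoc : (Σ a : Finset.Icc 1 s, CompositionsWith (fun c => P (c ++ [(a : ℕ)])) (s - a) l) →
      CompositionsWith P s (l + 1) := fun ⟨a, c⟩ =>
    have ha := Finset.mem_Icc.mp a.2
    ⟨c.1 ++ [a.1], fun x hx => by
        rcases List.mem_append.mp hx with hx | hx
        · exact c.2.1 x hx
        · rw [List.mem_singleton.mp hx]; exact ha.1,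
      by simp [c.2.2.1]; omega, by simp [c.2.2.2.1], c.2.2.2.2⟩
  have hsnoc : Function.Bijective snoc := by
    constructor
    · rintro ⟨a, c⟩ ⟨a', c'⟩ h
      obtain ⟨hc, ha⟩ := List.append_inj' (congrArg Subtype.val h) rfl
      exact Sigma.subtype_ext (Subtype.ext (List.singleton_inj.mp ha)) hc
    · rintro ⟨c, hpos, hsum, hlen, hP⟩
      obtain ⟨c', a, rfl⟩ : ∃ c' a, c = c' ++ [a] := by
        rcases List.eq_nil_or_concat' c with rfl | h
        · simp at hlen
        · exact h
      simp only [List.mem_append, List.mem_singleton] at hpos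
      simp only [List.sum_append, List.sum_singleton] at hsum
      have ha := hpos a (Or.inr rfl)
      exact ⟨⟨⟨a, Finset.mem_Icc.mpr ⟨ha, by omega⟩⟩,
        ⟨c', fun x hx => hpos x (Or.inl hx), by dsimp only; omega, by simpa using hlen, hP⟩⟩, rfl⟩
  rw [← Nat.card_congr (Equiv.ofBijective snoc hsnoc), Nat.card_sigma]
  exact Finset.sum_coe_sort (Finset.Icc 1 s)
    fun a => Nat.card (CompositionsWith (fun c => P (c ++ [a])) (s - a) l)

theorem card_eq_sum_fiber (g : List ℕ → ℕ) {N : ℕ} (hg : ∀ c, g c < N) (Q : ℕ → Prop)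
    [DecidablePred Q] :
    Nat.card (CompositionsWith (fun c => Q (g c)) s l) =
      ∑ j ∈ Finset.range N,
        if Q j then Nat.card (CompositionsWith (fun c => g c = j) s l) else 0 := by
  let incl : (Σ j : {j : Fin N // Q j}, CompositionsWith (fun c => g c = j) s l) →
      CompositionsWith (fun c => Q (g c)) s l := fun ⟨j, c⟩ =>
    ⟨c.1, c.2.1, c.2.2.1, c.2.2.2.1, by show Q (g c.1); rw [c.2.2.2.2]; exact j.2⟩
  have hincl : Function.Bijective incl := by
    constructor
    · rintro ⟨j, c⟩ ⟨j', c'⟩ h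
      have hc : c.1 = c'.1 := congrArg Subtype.val h
      refine Sigma.subtype_ext (Subtype.ext (Fin.ext ?_)) hc
      rw [← c.2.2.2.2, ← c'.2.2.2.2, hc]
    · rintro ⟨c, hc⟩
      exact ⟨⟨⟨⟨g c, hg c⟩, hc.2.2.2⟩, ⟨c, hc.1, hc.2.1, hc.2.2.1, rfl⟩⟩, rfl⟩
  rw [← Nat.card_congr (Equiv.ofBijective incl hincl), Nat.card_sigma,
    ← Finset.sum_subtype (Finset.univ.filter fun j : Fin N => Q j) (by simp)
      (fun j : Fin N => Nat.card (CompositionsWith (fun c => g c = j) s l)),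
    Finset.sum_filter]
  exact Fin.sum_univ_eq_sum_range
    (fun j => if Q j then Nat.card (CompositionsWith (fun c => g c = j) s l) else 0) N

end CompositionsWith

section Transfer

variable (b : ℕ → ℕ) (n : ℕ)

noncomputable def stateSeries (i : ℕ) : MvPowerSeries (Fin 2) ℚ :=
  fun d => Nat.card (CompositionsWith (fun c => greedyState b n c = i) (d 0) (d 1))

def stepSet (j i : ℕ) : Set ℕ := {a | 1 ≤ a ∧ greedyStep b n j a = i}

variable {b n}

theorem coeff_stateSeries (i : ℕ) (d : Fin 2 →₀ ℕ) :
    coeff d (stateSeries b n i) =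
      Nat.card (CompositionsWith (fun c => greedyState b n c = i) (d 0) (d 1)) := rfl

theorem stateSeries_transfer (i : ℕ) :
    stateSeries b n i = (if i = 0 then 1 else 0) +
      ∑ j ∈ Finset.range (n + 1), stateSeries b n j * partSeries (stepSet b n j i) := by
  classical
  ext d
  have hzero : ∀ j, 0 ∉ stepSet b n j i := fun j h => by simp [stepSet] at h
  rw [map_add, map_sum, coeff_stateSeries, apply_ite (coeff d), coeff_one, (coeff d).map_zero]
  simp only [coeff_mul_partSeries _ (hzero _), coeff_stateSeries, bidegree_apply_zero,
    bidegree_apply_one]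
  rcases hd1 : d 1 with _ | l
  · have hd : d = 0 ↔ d 0 = 0 := by
      rw [show (0 : Fin 2 →₀ ℕ) = bidegree 0 0 by simp [bidegree], eq_bidegree_iff]; omega
    simp only [if_true, Finset.sum_const_zero, add_zero, CompositionsWith.card_length_zero,
      greedyState_nil, hd]
    by_cases hi : i = 0 <;> by_cases hd0 : d 0 = 0 <;> simp [hi, hd0, eq_comm]
  · have hd : d ≠ 0 := fun h => by simp [h] at hd1
    simp only [Nat.add_one_ne_zero, if_false, Nat.add_sub_cancel, if_neg hd, ite_self, zero_add,
      CompositionsWith.card_length_succ, greedyState_append_singleton, Finset.sum_filter]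
    push_cast
    rw [Finset.sum_comm]
    refine Finset.sum_congr rfl fun a ha => ?_
    rw [CompositionsWith.card_eq_sum_fiber (greedyState b n)
      (fun c => Nat.lt_succ_of_le (greedyState_le c)) (fun j => greedyStep b n j a = i)]
    push_cast
    refine Finset.sum_congr rfl fun j _ => ?_
    simp [stepSet, (Finset.mem_Icc.mp ha).1]

end Transfer

theorem constantCoeff_Dfac (k : ℕ) : constantCoeff (Dfac k) = 1 := by
  simp [Dfac, px, pu]

theorem constantCoeff_one_sub_px_sub_pu_mul_px : constantCoeff (1 - px - pu * px) = 1 := by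
  simp [px, pu]

noncomputable def blockFactor (k : ℕ) : MvPowerSeries (Fin 2) ℚ :=
  px ^ k + pu * px ^ k * (1 - px ^ k) * (Dfac k)⁻¹

section Solution

variable {b : ℕ → ℕ} {n : ℕ}

theorem stepSet_eq_empty {i j : ℕ} (hij : i < j) (hj : j ≤ n) : stepSet b n j i = ∅ :=
  Set.eq_empty_of_forall_notMem fun a ha =>
    have := le_greedyStep (b := b) (a := a) hj le_self_add
    by simp only [stepSet, Set.mem_ofPred_eq] at ha; omega

theorem partSeries_stepSet_mul_of_lt (hb : ∀ t, 0 < b t) {i j : ℕ} (hji : j < i) (hin : i < n) :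
    partSeries (stepSet b n j i) * (1 - px) =
      pu * px ^ (prefixSum b i - prefixSum b j) * (1 - px ^ b i) := by
  have hlt := prefixSum_strictMono hb hji
  have hsucc := prefixSum_succ (b := b) i
  have hset : stepSet b n j i = {a | prefixSum b i - prefixSum b j ≤ a ∧
      a < prefixSum b (i + 1) - prefixSum b j} := by
    ext a
    simp only [stepSet, Set.mem_ofPred_eq, greedyStep_eq_iff hin.le]
    omega
  rw [hset, partSeries_Ico_mul (by omega), show prefixSum b (i + 1) - prefixSum b j =
    prefixSum b i - prefixSum b j + b i by omega, pow_add]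
  ring

theorem partSeries_stepSet_self_mul (hb : ∀ t, 0 < b t) {i : ℕ} (hin : i < n) :
    partSeries (stepSet b n i i) * (1 - px) = pu * px - pu * px ^ b i := by
  have hsucc := prefixSum_succ (b := b) i
  have hset : stepSet b n i i = {a | 1 ≤ a ∧ a < b i} := by
    ext a
    simp only [stepSet, Set.mem_ofPred_eq, greedyStep_eq_iff hin.le]
    omega
  rw [hset, partSeries_Ico_mul (hb i), pow_one]

theorem partSeries_stepSet_last_mul (hb : ∀ t, 0 < b t) {j : ℕ} (hj : j < n) :
    partSeries (stepSet b n j n) * (1 - px) = pu * px ^ (prefixSum b n - prefixSum b j) := by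
  have hlt := prefixSum_strictMono hb hj
  have hset : stepSet b n j n = {a | prefixSum b n - prefixSum b j ≤ a} := by
    ext a
    simp only [stepSet, Set.mem_ofPred_eq, greedyStep_eq_iff le_rfl]
    omega
  rw [hset, partSeries_Ici_mul]

theorem partSeries_stepSet_last_self_mul :
    partSeries (stepSet b n n n) * (1 - px) = pu * px := by
  have hset : stepSet b n n n = {a | 1 ≤ a} := by
    ext a
    simp only [stepSet, Set.mem_ofPred_eq, greedyStep_eq_iff le_rfl]
    omega
  rw [hset, partSeries_Ici_mul, pow_one]

variable (b n)

/-- The states `j < i` enter the transfer equation of state `i` through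
`u x^{M_i - M_j} (1 - x^{b i})`, where `M = prefixSum b`. -/
noncomputable def deficitSeries (i : ℕ) : MvPowerSeries (Fin 2) ℚ :=
  ∑ j ∈ Finset.range i, stateSeries b n j * px ^ (prefixSum b i - prefixSum b j)

variable {b n}

theorem deficitSeries_zero : deficitSeries b n 0 = 0 := Finset.sum_range_zero _

theorem deficitSeries_succ (i : ℕ) :
    deficitSeries b n (i + 1) = (deficitSeries b n i + stateSeries b n i) * px ^ b i := by
  rw [deficitSeries, Finset.sum_range_succ, prefixSum_succ, Nat.add_sub_cancel_left, add_mul,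
    deficitSeries, Finset.sum_mul]
  congr 1
  refine Finset.sum_congr rfl fun j hj => ?_
  have := prefixSum_add_sum_Ico (b := b) (Finset.mem_range.mp hj).le
  rw [mul_assoc, ← pow_add]
  congr 2
  omega

theorem stateSeries_mul_Dfac (hb : ∀ t, 0 < b t) {i : ℕ} (hin : i < n) :
    stateSeries b n i * Dfac (b i) =
      (if i = 0 then 1 - px else 0) + pu * (1 - px ^ b i) * deficitSeries b n i := by
  have hsum : (∑ j ∈ Finset.range (n + 1), stateSeries b n j * partSeries (stepSet b n j i)) *
      (1 - px) = pu * (1 - px ^ b i) * deficitSeries b n i +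
        stateSeries b n i * (pu * px - pu * px ^ b i) := by
    rw [← Finset.sum_subset (Finset.range_subset_range.mpr (by omega : i + 1 ≤ n + 1))
        fun j hj hj' => by
          rw [stepSet_eq_empty (by simp at hj'; omega) (by simp at hj; omega), partSeries_empty,
            mul_zero],
      Finset.sum_range_succ, add_mul, mul_assoc, partSeries_stepSet_self_mul hb hin,
      deficitSeries, Finset.sum_mul, Finset.mul_sum]
    congr 1
    refine Finset.sum_congr rfl fun j hj => ?_
    rw [mul_assoc, partSeries_stepSet_mul_of_lt hb (Finset.mem_range.mp hj) hin]
    ring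
  have h := stateSeries_transfer (b := b) (n := n) i
  rw [Dfac]
  split_ifs at h ⊢ <;> linear_combination (1 - px) * h + hsum

theorem stateSeries_last_mul (hb : ∀ t, 0 < b t) (hn : 0 < n) :
    stateSeries b n n * (1 - px - pu * px) = pu * deficitSeries b n n := by
  have hsum : (∑ j ∈ Finset.range (n + 1), stateSeries b n j * partSeries (stepSet b n j n)) *
      (1 - px) = pu * deficitSeries b n n + stateSeries b n n * (pu * px) := by
    rw [Finset.sum_range_succ, add_mul, mul_assoc, partSeries_stepSet_last_self_mul,
      deficitSeries, Finset.sum_mul, Finset.mul_sum]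
    congr 1
    refine Finset.sum_congr rfl fun j hj => ?_
    rw [mul_assoc, partSeries_stepSet_last_mul hb (Finset.mem_range.mp hj)]
    ring
  have h := stateSeries_transfer (b := b) (n := n) n
  rw [if_neg hn.ne', zero_add] at h
  linear_combination (1 - px) * h + hsum

theorem stateSeries_eq_mul_inv (hb : ∀ t, 0 < b t) {i : ℕ} (hin : i < n) :
    stateSeries b n i = ((if i = 0 then 1 - px else 0) +
      pu * (1 - px ^ b i) * deficitSeries b n i) * (Dfac (b i))⁻¹ :=
  (MvPowerSeries.eq_mul_inv_iff_mul_eq (by simp [constantCoeff_Dfac])).mpr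
    (stateSeries_mul_Dfac hb hin)

theorem deficitSeries_one (hb : ∀ t, 0 < b t) (hn : 0 < n) :
    deficitSeries b n 1 = (1 - px) * (Dfac (b 0))⁻¹ * px ^ b 0 := by
  rw [deficitSeries_succ, deficitSeries_zero, zero_add, stateSeries_eq_mul_inv hb hn, if_pos rfl,
    deficitSeries_zero, mul_zero, add_zero]

theorem deficitSeries_succ_of_pos (hb : ∀ t, 0 < b t) {i : ℕ} (hi : 0 < i) (hin : i < n) :
    deficitSeries b n (i + 1) = deficitSeries b n i * blockFactor (b i) := by
  rw [deficitSeries_succ, stateSeries_eq_mul_inv hb hin, if_neg hi.ne', blockFactor]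
  ring

theorem deficitSeries_eq (hb : ∀ t, 0 < b t) {i : ℕ} (hi : 1 ≤ i) (hin : i ≤ n) :
    deficitSeries b n i =
      (1 - px) * (Dfac (b 0))⁻¹ * px ^ b 0 * ∏ t ∈ Finset.Ico 1 i, blockFactor (b t) := by
  induction i, hi using Nat.le_induction with
  | base => rw [deficitSeries_one hb hin, Finset.Ico_self, Finset.prod_empty, mul_one]
  | succ i hi ih =>
    rw [deficitSeries_succ_of_pos hb hi hin, ih (by omega), Finset.prod_Ico_succ_top hi, mul_assoc]

theorem stateSeries_last (hb : ∀ t, 0 < b t) (hn : 0 < n) :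
    stateSeries b n n = pu * px ^ b 0 * (1 - px) * (Dfac (b 0))⁻¹ * (1 - px - pu * px)⁻¹ *
      ∏ t ∈ Finset.Ico 1 n, blockFactor (b t) := by
  rw [(MvPowerSeries.eq_mul_inv_iff_mul_eq (by simp [constantCoeff_one_sub_px_sub_pu_mul_px])).mpr
    (stateSeries_last_mul hb hn), deficitSeries_eq hb hn le_rfl]
  ring

end Solution

theorem prod_filter_val_ne_zero_eq_prod_Ico {M : Type*} [CommMonoid M] {n : ℕ} (f : ℕ → M) :
    ∏ i ∈ Finset.univ.filter (fun i : Fin n => i.val ≠ 0), f i = ∏ t ∈ Finset.Ico 1 n, f t := by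
  have : (Finset.univ.filter fun i : Fin n => i.val ≠ 0).map Fin.valEmbedding =
      Finset.Ico 1 n := by
    ext t
    simp only [Finset.mem_map, Finset.mem_filter, Finset.mem_univ, true_and, Fin.valEmbedding_apply,
      Finset.mem_Ico]
    exact ⟨by rintro ⟨i, hi, rfl⟩; omega, fun ht => ⟨⟨t, ht.2⟩, by simp; omega, rfl⟩⟩
  rw [← this, Finset.prod_map]
  rfl

end VincularPattern

/-- The generating function `Σ_c x^{sum(c)} u^{len(c)}` over all compositions containing the
vincular pattern `1^{m_1}-…-1^{m_n}` equals
`u x^{m_1}(1−x) D_1⁻¹ (1−x−ux)⁻¹ ∏_{i=2}^n (x^{m_i} + u x^{m_i}(1 − x^{m_i}) D_i⁻¹)`. -/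
theorem stmt12 (n : ℕ) (hn : 1 ≤ n) (m : Fin n → ℕ) (hm : ∀ i, 1 ≤ m i)
    (S : MvPowerSeries (Fin 2) ℚ)
    (hS : ∀ d : Fin 2 →₀ ℕ, MvPowerSeries.coeff d S =
      Nat.card {c : List ℕ //
        (∀ x ∈ c, 0 < x) ∧ c.sum = d 0 ∧ c.length = d 1 ∧ CompContains m c}) :
    S = pu * px ^ (m ⟨0, hn⟩) * (1 - px) * (Dfac (m ⟨0, hn⟩))⁻¹ * (1 - px - pu * px)⁻¹ *
      ∏ i ∈ Finset.univ.filter fun i : Fin n => i.val ≠ 0,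
        (px ^ (m i) + pu * px ^ (m i) * (1 - px ^ (m i)) * (Dfac (m i))⁻¹) := by
  have hSstate : S = VincularPattern.stateSeries (VincularPattern.blockSize m) n n := by
    ext d
    simp only [hS, VincularPattern.coeff_stateSeries,
      VincularPattern.compContains_iff_greedyState_eq m]
  have hprod := VincularPattern.prod_filter_val_ne_zero_eq_prod_Ico (n := n)
    fun t => VincularPattern.blockFactor (VincularPattern.blockSize m t)
  simp only [VincularPattern.blockSize_val] at hprod
  rw [hSstate, VincularPattern.stateSeries_last (VincularPattern.blockSize_pos hm) hn, ← hprod,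
    ← VincularPattern.blockSize_val m ⟨0, hn⟩]
  rfl
end

section
/- Call a composition c = (c_1, …, c_p) with p ≥ 1 a cyclic Carlitz composition if no two adjacent parts are equal and either p = 1 or c_1 ≠ c_p. In ℚ[[x]], Σ_c x^{sum(c)}, summed over all cyclic Carlitz compositions c, equals A·(1 − B)^{-1} + C, where A, B, C ∈ ℚ[[x]] are the coefficientwise-convergent sums A = Σ_{i≥1} x^i·((1 + x^i)^{-1})^2, B = Σ_{i≥1} x^i·(1 + x^i)^{-1}, and C = Σ_{i≥1} x^{2i}·(1 + x^i)^{-1} (each summand has order ≥ i, so each coefficient of A, B, C is a finite sum, and 1 − B has constant coefficient 1, hence is invertible). -/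
/-!
Let `L` count all Carlitz compositions (the empty one included), `Lᵢ` those ending in `i` and
`Dᵢ` those beginning and ending in `i`. Appending a part `i` is a bijection from the Carlitz
compositions of `n` not ending in `i` onto those of `n + i` ending in `i`; hence
`Lᵢ = xⁱ(1 + xⁱ)⁻¹ L` and, since reversal exchanges first and last parts,
`Dᵢ = xⁱ(1 + xⁱ)⁻¹ (Lᵢ + 1)`. Sorting nonempty compositions by their last part gives
`B L = ∑ Lᵢ = L - 1`, so `(1 - B)⁻¹ = L`. A nonempty Carlitz composition fails to be cyclic
exactly when its first and last parts agree and it has at least two parts, so the cyclic ones are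
counted by `∑ᵢ (Lᵢ - Dᵢ + xⁱ)`, which the two formulas above turn into `A L + C`.
-/

def CyclicCarlitz (c : List ℕ) : Prop :=
  c ≠ [] ∧ (∀ x ∈ c, 0 < x) ∧ List.Chain' (· ≠ ·) c ∧
    (c.length = 1 ∨ c.head? ≠ c.getLast?)

/-- `A = Σ_{i≥1} x^i((1+x^i)⁻¹)²`, defined coefficientwise (the summand for `i` has order
`≥ i`, so each coefficient is a finite sum). -/
noncomputable def serA : PowerSeries ℚ :=
  PowerSeries.mk fun n => ∑ i ∈ Finset.Icc 1 n,
    PowerSeries.coeff (R := ℚ) n (PowerSeries.X ^ i * ((1 + PowerSeries.X ^ i)⁻¹) ^ 2)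

noncomputable def serB : PowerSeries ℚ :=
  PowerSeries.mk fun n => ∑ i ∈ Finset.Icc 1 n,
    PowerSeries.coeff (R := ℚ) n (PowerSeries.X ^ i * (1 + PowerSeries.X ^ i)⁻¹)

noncomputable def serC : PowerSeries ℚ :=
  PowerSeries.mk fun n => ∑ i ∈ Finset.Icc 1 n,
    PowerSeries.coeff (R := ℚ) n (PowerSeries.X ^ (2 * i) * (1 + PowerSeries.X ^ i)⁻¹)

open PowerSeries Finset

namespace PowerSeries

variable {R : Type*} [Semiring R]

/-- `∑_{i ≥ 1} F i`, computed coefficientwise as `∑_{i=1}^{n} coeff n (F i)`: this is the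
actual sum when `X ^ i ∣ F i` for all `i`. -/
noncomputable def coeffwiseSum (F : ℕ → R⟦X⟧) : R⟦X⟧ :=
  mk fun n => ∑ i ∈ Icc 1 n, coeff n (F i)

@[simp]
theorem coeff_coeffwiseSum (F : ℕ → R⟦X⟧) (n : ℕ) :
    coeff n (coeffwiseSum F) = ∑ i ∈ Icc 1 n, coeff n (F i) :=
  coeff_mk _ _

theorem coeffwiseSum_congr {F G : ℕ → R⟦X⟧} (h : ∀ i, 0 < i → F i = G i) :
    coeffwiseSum F = coeffwiseSum G :=
  ext fun n => by
    simp only [coeff_coeffwiseSum]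
    exact sum_congr rfl fun i hi => by rw [h i (mem_Icc.1 hi).1]

theorem coeffwiseSum_add (F G : ℕ → R⟦X⟧) :
    coeffwiseSum (fun i => F i + G i) = coeffwiseSum F + coeffwiseSum G :=
  ext fun n => by simp [sum_add_distrib]

theorem coeffwiseSum_mul {F : ℕ → R⟦X⟧} (hF : ∀ i, X ^ i ∣ F i) (G : R⟦X⟧) :
    coeffwiseSum F * G = coeffwiseSum fun i => F i * G := by
  ext n
  simp only [coeff_mul, coeff_coeffwiseSum, sum_mul]
  rw [sum_comm]
  refine sum_congr rfl fun p hp => ?_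
  have hpn : p.1 ≤ n := Finset.HasAntidiagonal.antidiagonal.fst_le hp
  refine sum_subset (Icc_subset_Icc_right hpn) fun i hi hi' => ?_
  have hpi : p.1 < i := by simp only [mem_Icc] at hi hi'; omega
  rw [X_pow_dvd_iff.1 (hF i) p.1 hpi, zero_mul]

theorem mul_one_add_X_pow_eq {f g : R⟦X⟧} {i : ℕ} (hf : X ^ i ∣ f)
    (h : ∀ n, coeff (n + i) f + coeff n f = coeff n g) : f * (1 + X ^ i) = X ^ i * g := by
  ext n
  rw [mul_add, mul_one, map_add, coeff_mul_X_pow', coeff_X_pow_mul']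
  obtain hn | ⟨m, rfl⟩ : n < i ∨ ∃ m, n = m + i :=
    (lt_or_ge n i).imp_right fun h => ⟨n - i, by omega⟩
  · rw [if_neg (by omega), if_neg (by omega), add_zero, X_pow_dvd_iff.1 hf n hn]
  · rw [if_pos (by omega), if_pos (by omega), Nat.add_sub_cancel, h]

theorem eq_X_pow_mul_inv_one_add_X_pow_mul {k : Type*} [Field k] {f g : k⟦X⟧} {i : ℕ}
    (hi : 0 < i) (hf : X ^ i ∣ f) (h : ∀ n, coeff (n + i) f + coeff n f = coeff n g) :
    f = X ^ i * (1 + X ^ i)⁻¹ * g := by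
  rw [mul_right_comm, eq_mul_inv_iff_mul_eq (by simp [hi.ne']), mul_one_add_X_pow_eq hf h]

end PowerSeries

theorem Finset.card_filter_and_add_card_filter_and_not {α : Type*} (s : Finset α)
    (p q : α → Prop) [DecidablePred p] [DecidablePred q] :
    #{a ∈ s | p a ∧ q a} + #{a ∈ s | p a ∧ ¬q a} = #{a ∈ s | p a} := by
  rw [← filter_filter, ← filter_filter, card_filter_add_card_filter_not]

def carlitz (n : ℕ) : Finset (List ℕ) :=
  {c ∈ univ.image (Composition.blocks (n := n)) | c.IsChain (· ≠ ·)}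

theorem mem_carlitz {n : ℕ} {c : List ℕ} :
    c ∈ carlitz n ↔ (∀ x ∈ c, 0 < x) ∧ c.IsChain (· ≠ ·) ∧ c.sum = n := by
  simp only [carlitz, mem_filter, mem_image, mem_univ, true_and]
  constructor
  · rintro ⟨⟨b, rfl⟩, hc⟩
    exact ⟨fun _ => b.blocks_pos, hc, b.blocks_sum⟩
  · rintro ⟨hpos, hc, hsum⟩
    exact ⟨⟨⟨c, hpos _, hsum⟩, rfl⟩, hc⟩

theorem mem_Icc_of_mem_carlitz {n a : ℕ} {c : List ℕ} (hc : c ∈ carlitz n) (ha : a ∈ c) :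
    a ∈ Icc 1 n := by
  obtain ⟨hpos, -, rfl⟩ := mem_carlitz.1 hc
  exact mem_Icc.2 ⟨hpos a ha, List.le_sum_of_mem ha⟩

theorem reverse_mem_carlitz {n : ℕ} {c : List ℕ} (hc : c ∈ carlitz n) :
    c.reverse ∈ carlitz n := by
  obtain ⟨hpos, hchain, hsum⟩ := mem_carlitz.1 hc
  exact mem_carlitz.2 ⟨by simpa using hpos,
    List.isChain_reverse.2 (hchain.imp fun _ _ => Ne.symm), by simpa using hsum⟩

theorem append_singleton_mem_carlitz {n i : ℕ} {c : List ℕ} :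
    c ++ [i] ∈ carlitz (n + i) ↔ c ∈ carlitz n ∧ 0 < i ∧ c.getLast? ≠ some i := by
  simp only [mem_carlitz, List.mem_append, List.mem_singleton, List.isChain_append,
    List.isChain_singleton, List.head?_cons, Option.mem_def, List.sum_append, List.sum_singleton,
    Nat.add_right_cancel_iff]
  constructor
  · rintro ⟨hpos, ⟨hc, -, hlast⟩, hsum⟩
    exact ⟨⟨fun x hx => hpos x (.inl hx), hc, hsum⟩, hpos i (.inr rfl),
      fun h => hlast i h i rfl rfl⟩
  · rintro ⟨⟨hpos, hc, hsum⟩, hi, hlast⟩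
    refine ⟨fun x hx => hx.elim (hpos x) (· ▸ hi), ⟨hc, trivial, ?_⟩, hsum⟩
    rintro x hx y hy rfl
    exact hlast (hx.trans hy.symm)

theorem card_carlitz_getLast_eq_some {n i : ℕ} (hi : 0 < i) (Q : List ℕ → Prop)
    [DecidablePred Q] :
    #{c ∈ carlitz (n + i) | c.getLast? = some i ∧ Q c} =
      #{c ∈ carlitz n | c.getLast? ≠ some i ∧ Q (c ++ [i])} := by
  symm
  refine card_nbij' (· ++ [i]) List.dropLast ?_ ?_ (fun c _ => List.dropLast_concat) ?_
  · intro c hc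
    simp only [mem_coe, mem_filter] at hc ⊢
    exact ⟨append_singleton_mem_carlitz.2 ⟨hc.1, hi, hc.2.1⟩, List.getLast?_concat, hc.2.2⟩
  · intro d hd
    simp only [mem_coe, mem_filter] at hd ⊢
    obtain ⟨hd, hlast, hQ⟩ := hd
    rw [← List.dropLast_append_getLast? i hlast] at hd hQ
    exact ⟨(append_singleton_mem_carlitz.1 hd).1, (append_singleton_mem_carlitz.1 hd).2.2, hQ⟩
  · intro d hd
    exact List.dropLast_append_getLast? i (mem_filter.1 hd).2.1

theorem card_carlitz_head_eq_some (n i : ℕ) :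
    #{c ∈ carlitz n | c.head? = some i} = #{c ∈ carlitz n | c.getLast? = some i} := by
  refine card_nbij' List.reverse List.reverse ?_ ?_ (fun c _ => List.reverse_reverse c)
    (fun c _ => List.reverse_reverse c) <;>
  · intro c hc
    simp only [mem_coe, mem_filter, List.head?_reverse, List.getLast?_reverse] at hc ⊢
    exact ⟨reverse_mem_carlitz hc.1, hc.2⟩

theorem card_carlitz_eq_nil (n : ℕ) : #{c ∈ carlitz n | c = []} = if n = 0 then 1 else 0 := by
  split_ifs with hn
  · subst hn
    rw [card_eq_one]
    refine ⟨[], ?_⟩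
    ext c
    simp only [mem_filter, mem_singleton, and_iff_right_iff_imp]
    rintro rfl
    exact mem_carlitz.2 ⟨by simp, List.IsChain.nil, rfl⟩
  · rw [card_eq_zero, filter_eq_empty_iff]
    rintro c hc rfl
    exact hn (mem_carlitz.1 hc).2.2.symm

theorem card_carlitz_length_eq_one (n : ℕ) :
    #{c ∈ carlitz n | c.length = 1} = if 0 < n then 1 else 0 := by
  split_ifs with hn
  · rw [card_eq_one]
    refine ⟨[n], ?_⟩
    ext c
    simp only [mem_filter, mem_carlitz, mem_singleton, List.length_eq_one_iff]
    constructor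
    · rintro ⟨⟨-, -, hsum⟩, a, rfl⟩
      simpa using hsum
    · rintro rfl
      exact ⟨⟨by simpa using hn, List.isChain_singleton n, by simp⟩, n, rfl⟩
  · rw [card_eq_zero, filter_eq_empty_iff]
    intro c hc hlen
    obtain ⟨a, rfl⟩ := List.length_eq_one_iff.1 hlen
    obtain ⟨hpos, -, hsum⟩ := mem_carlitz.1 hc
    simp only [List.sum_cons, List.sum_nil, add_zero] at hsum
    exact hn (hsum ▸ hpos a (by simp))

theorem card_carlitz_getLast_add {n i : ℕ} (hi : 0 < i) :
    #{c ∈ carlitz (n + i) | c.getLast? = some i} + #{c ∈ carlitz n | c.getLast? = some i} =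
      #(carlitz n) := by
  have h := card_carlitz_getLast_eq_some (n := n) hi (fun _ => True)
  simp only [and_true] at h
  rw [h, add_comm, card_filter_add_card_filter_not]

theorem card_carlitz_head_getLast_add {n i : ℕ} (hi : 0 < i) :
    #{c ∈ carlitz (n + i) | c.head? = some i ∧ c.getLast? = some i} +
        #{c ∈ carlitz n | c.head? = some i ∧ c.getLast? = some i} =
      #{c ∈ carlitz n | c.getLast? = some i} + if n = 0 then 1 else 0 := by
  have h := card_carlitz_getLast_eq_some (n := n) hi (fun c => c.head? = some i)
  have hnil : {c ∈ carlitz n | (c.getLast? ≠ some i ∧ (c ++ [i]).head? = some i) ∧ c = []} =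
      {c ∈ carlitz n | c = []} :=
    filter_congr fun c _ => ⟨And.right, by rintro rfl; simp⟩
  have hcons :
      {c ∈ carlitz n | (c.getLast? ≠ some i ∧ (c ++ [i]).head? = some i) ∧ c ≠ []} =
      {c ∈ carlitz n | c.head? = some i ∧ ¬c.getLast? = some i} :=
    filter_congr fun c _ => by cases c <;> simp [and_comm]
  rw [filter_congr fun _ _ => and_comm, h,
    ← card_filter_and_add_card_filter_and_not _ _ (· = []),
    hnil, hcons, card_carlitz_eq_nil, ← card_carlitz_head_eq_some,
    ← card_filter_and_add_card_filter_and_not (carlitz n) (fun c => c.head? = some i)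
      (fun c => c.getLast? = some i)]
  ring

theorem sum_card_carlitz_getLast_eq_some (n : ℕ) (P : List ℕ → Prop) [DecidablePred P] :
    ∑ i ∈ Icc 1 n, #{c ∈ carlitz n | c.getLast? = some i ∧ P c} =
      #{c ∈ carlitz n | c ≠ [] ∧ P c} := by
  rw [card_eq_sum_card_fiberwise (f := List.getLast?) (t := (Icc 1 n).map .some), sum_map]
  · refine sum_congr rfl fun i _ => ?_
    rw [filter_filter]
    refine congrArg card (filter_congr fun c _ => ?_)
    constructor
    · rintro ⟨hc, hP⟩
      exact ⟨⟨by rintro rfl; simp at hc, hP⟩, hc⟩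
    · rintro ⟨⟨-, hP⟩, hc⟩
      exact ⟨hc, hP⟩
  · intro c hc
    rw [mem_coe, mem_filter] at hc
    obtain ⟨a, ha⟩ := Option.isSome_iff_exists.1 (List.getLast?_isSome.2 hc.2.1)
    rw [ha, mem_coe, mem_map]
    exact ⟨a, mem_Icc_of_mem_carlitz hc.1 (List.mem_of_mem_getLast? ha), rfl⟩

theorem sum_card_carlitz_getLast (n : ℕ) :
    ∑ i ∈ Icc 1 n, #{c ∈ carlitz n | c.getLast? = some i} =
      #{c ∈ carlitz n | c ≠ []} := by
  simpa only [and_true] using sum_card_carlitz_getLast_eq_some n fun _ => True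

theorem card_carlitz_cyclic_add (n : ℕ) :
    #{c ∈ carlitz n | c ≠ [] ∧ (c.length = 1 ∨ c.head? ≠ c.getLast?)} +
        #{c ∈ carlitz n | c ≠ [] ∧ c.head? = c.getLast?} =
      #{c ∈ carlitz n | c ≠ []} + #{c ∈ carlitz n | c.length = 1} := by
  rw [← card_union_add_card_inter, ← filter_or, ← filter_and]
  congr 2 <;> refine filter_congr fun c _ => ?_
  · tauto
  · constructor
    · exact fun h => h.1.2.resolve_right (not_not_intro h.2.2)
    · intro h
      obtain ⟨a, rfl⟩ := List.length_eq_one_iff.1 h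
      simp

theorem X_pow_dvd_mk_card_carlitz {R : Type*} [Semiring R] (i : ℕ) (P : List ℕ → Prop)
    [DecidablePred P] (hP : ∀ c, P c → i ∈ c) :
    X ^ i ∣ mk fun n => (#{c ∈ carlitz n | P c} : R) :=
  X_pow_dvd_iff.2 fun m hm => by
    rw [coeff_mk, card_eq_zero.2 (filter_eq_empty_iff.2 fun c hc hPc => ?_), Nat.cast_zero]
    have := mem_Icc.1 (mem_Icc_of_mem_carlitz hc (hP c hPc))
    omega

theorem natCard_cyclicCarlitz (n : ℕ) :
    Nat.card {c : List ℕ // CyclicCarlitz c ∧ c.sum = n} =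
      #{c ∈ carlitz n | c ≠ [] ∧ (c.length = 1 ∨ c.head? ≠ c.getLast?)} := by
  rw [← Nat.card_eq_finsetCard]
  refine Nat.card_congr (Equiv.subtypeEquivRight fun c => ?_)
  rw [mem_filter, mem_carlitz, CyclicCarlitz]
  exact ⟨fun ⟨⟨hne, hpos, hchain, hcyc⟩, hsum⟩ => ⟨⟨hpos, hchain, hsum⟩, hne, hcyc⟩,
    fun ⟨⟨hpos, hchain, hsum⟩, hne, hcyc⟩ => ⟨⟨hne, hpos, hchain, hcyc⟩, hsum⟩⟩

theorem card_carlitz_cyclic_eq_sum (n : ℕ) :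
    (#{c ∈ carlitz n | c ≠ [] ∧ (c.length = 1 ∨ c.head? ≠ c.getLast?)} : ℚ) =
      ∑ i ∈ Icc 1 n, ((#{c ∈ carlitz n | c.getLast? = some i} : ℚ) -
        #{c ∈ carlitz n | c.head? = some i ∧ c.getLast? = some i} +
        if n = i then 1 else 0) := by
  have hD : ∑ i ∈ Icc 1 n, #{c ∈ carlitz n | c.head? = some i ∧ c.getLast? = some i} =
      #{c ∈ carlitz n | c ≠ [] ∧ c.head? = c.getLast?} := by
    rw [← sum_card_carlitz_getLast_eq_some]
    refine sum_congr rfl fun i _ => congrArg card (filter_congr fun c _ => ?_)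
    exact ⟨fun ⟨hh, hl⟩ => ⟨hl, hh.trans hl.symm⟩, fun ⟨hl, he⟩ => ⟨he.trans hl, hl⟩⟩
  have hcyc := card_carlitz_cyclic_add n
  rw [card_carlitz_length_eq_one, ← sum_card_carlitz_getLast, ← hD] at hcyc
  rw [sum_add_distrib, sum_sub_distrib, sum_ite_eq]
  simp only [mem_Icc, le_refl, and_true]
  replace hcyc := congrArg (Nat.cast : ℕ → ℚ) hcyc
  push_cast at hcyc
  split_ifs at hcyc ⊢ <;> first | omega | linarith

noncomputable def carlitzSeries : ℚ⟦X⟧ :=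
  mk fun n => #(carlitz n)

noncomputable def carlitzEndingSeries (i : ℕ) : ℚ⟦X⟧ :=
  mk fun n => #{c ∈ carlitz n | c.getLast? = some i}

noncomputable def carlitzStartEndSeries (i : ℕ) : ℚ⟦X⟧ :=
  mk fun n => #{c ∈ carlitz n | c.head? = some i ∧ c.getLast? = some i}

theorem carlitzEndingSeries_eq {i : ℕ} (hi : 0 < i) :
    carlitzEndingSeries i = X ^ i * (1 + X ^ i)⁻¹ * carlitzSeries :=
  eq_X_pow_mul_inv_one_add_X_pow_mul hi
    (X_pow_dvd_mk_card_carlitz i _ fun _ => List.mem_of_mem_getLast?) fun n => by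
      simp only [carlitzEndingSeries, carlitzSeries, coeff_mk]
      exact_mod_cast card_carlitz_getLast_add hi

theorem carlitzStartEndSeries_eq {i : ℕ} (hi : 0 < i) :
    carlitzStartEndSeries i = X ^ i * (1 + X ^ i)⁻¹ * (carlitzEndingSeries i + 1) :=
  eq_X_pow_mul_inv_one_add_X_pow_mul hi
    (X_pow_dvd_mk_card_carlitz i _ fun _ h => List.mem_of_mem_getLast? h.2) fun n => by
      simp only [carlitzStartEndSeries, carlitzEndingSeries, coeff_mk, map_add, coeff_one]
      exact_mod_cast card_carlitz_head_getLast_add hi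

theorem serB_mul_carlitzSeries : serB * carlitzSeries = carlitzSeries - 1 := by
  rw [show serB = coeffwiseSum fun i => X ^ i * (1 + X ^ i)⁻¹ from rfl,
    coeffwiseSum_mul (fun i => dvd_mul_right _ _),
    coeffwiseSum_congr fun i hi => (carlitzEndingSeries_eq hi).symm]
  ext n
  have hsplit := card_filter_add_card_filter_not (s := carlitz n) (· = [])
  rw [card_carlitz_eq_nil] at hsplit
  simp only [coeff_coeffwiseSum, carlitzEndingSeries, carlitzSeries, coeff_mk, map_sub, coeff_one]
  rw [← hsplit, ← sum_card_carlitz_getLast]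
  split_ifs <;> push_cast <;> ring

theorem inv_one_sub_serB : (1 - serB)⁻¹ = carlitzSeries := by
  have hB : constantCoeff serB = 0 := by
    rw [← coeff_zero_eq_constantCoeff_apply, serB, coeff_mk, Icc_eq_empty_of_lt one_pos,
      sum_empty]
  rw [inv_eq_iff_mul_eq_one (by simp [hB]), mul_sub, mul_one, mul_comm,
    serB_mul_carlitzSeries, sub_sub_cancel]

theorem serA_mul_carlitzSeries_add_serC :
    serA * carlitzSeries + serC =
      coeffwiseSum fun i => carlitzEndingSeries i - carlitzStartEndSeries i + X ^ i := by
  rw [show serA = coeffwiseSum fun i => X ^ i * ((1 + X ^ i)⁻¹) ^ 2 from rfl,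
    show serC = coeffwiseSum fun i => X ^ (2 * i) * (1 + X ^ i)⁻¹ from rfl,
    coeffwiseSum_mul (fun i => dvd_mul_right _ _), ← coeffwiseSum_add]
  refine coeffwiseSum_congr fun i hi => ?_
  have hunit : (1 + X ^ i : ℚ⟦X⟧) * (1 + X ^ i)⁻¹ = 1 :=
    PowerSeries.mul_inv_cancel _ (by simp [hi.ne'])
  rw [carlitzStartEndSeries_eq hi, carlitzEndingSeries_eq hi]
  linear_combination (X ^ i * (1 + X ^ i)⁻¹ * carlitzSeries + X ^ i) * hunit

/-- The generating function of cyclic Carlitz compositions by sum of parts equals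
`A(1 − B)⁻¹ + C`. -/
theorem stmt19 :
    PowerSeries.mk (fun n => (Nat.card {c : List ℕ // CyclicCarlitz c ∧ c.sum = n} : ℚ)) =
      serA * (1 - serB)⁻¹ + serC := by
  rw [inv_one_sub_serB, serA_mul_carlitzSeries_add_serC]
  ext n
  rw [coeff_mk, natCard_cyclicCarlitz, card_carlitz_cyclic_eq_sum, coeff_coeffwiseSum]
  simp only [carlitzEndingSeries, carlitzStartEndSeries, map_add, map_sub, coeff_mk, coeff_X_pow]
end
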